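/- arXiv:1707.08760 — 6 statements merged into one kernel-verified Lean document; each statement's English description precedes it below -/
import Mathlib

section
/- If a variable-electorate voting rule f satisfies participation, then for every finite electorate N, every profile P on N, and every voter i ∈ N, f(P) ≽_i f(P_{-i}, ≻_i^rev); that is, f satisfies half-way monotonicity on every fixed electorate. -/
/-- The reverse of a linear order: `a` is above `b` in `revOrder L` iff `b` is above `a` in `L`. -/
def revOrder {A : Type*} (L : LinearOrder A) : LinearOrder A :=
  @OrderDual.instLinearOrder A L

/-! Truthful participation gives `f(P_{-i}) ≼ f(P)` in voter `i`'s order `≻`, and participation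
with the reversed order gives `f(P_{-i}) ≽ f(P_{-i}, ≻^rev)` in `≻`; chain the two. -/

section ExtendProfile

variable {β : Type*} {M : Finset ℕ} {i : ℕ}

/-- The profile `P + (i, b)`, in the shape used by the participation axiom. -/
def extendProfile (P : ∀ j ∈ M, β) (i : ℕ) (b : β) : ∀ j ∈ insert i M, β :=
  fun j _ => if h : j ∈ M then P j h else b

theorem extendProfile_restrict (hi : i ∉ M) (P : ∀ j ∈ insert i M, β) (b : β) :
    extendProfile (fun j hj => P j (Finset.mem_insert_of_mem hj)) i b =
      fun j hj => if j = i then b else P j hj := by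
  funext j hj
  by_cases hji : j = i
  · subst hji
    simp [extendProfile, hi]
  · have hjM : j ∈ M := (Finset.mem_insert.mp hj).resolve_left hji
    simp [extendProfile, hjM, hji]

theorem extendProfile_restrict_self (hi : i ∉ M) (P : ∀ j ∈ insert i M, β) :
    extendProfile (fun j hj => P j (Finset.mem_insert_of_mem hj)) i
      (P i (Finset.mem_insert_self i M)) = P := by
  rw [extendProfile_restrict hi]
  funext j hj
  split_ifs with hji
  · subst hji
    rfl
  · rfl

end ExtendProfile

theorem revOrder_le_iff {A : Type*} (L : LinearOrder A) (a b : A) :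
    (revOrder L).le a b ↔ L.le b a :=
  Iff.rfl

theorem participation_implies_halfwayMonotonicity_general {A : Type*}
    (f : (N : Finset ℕ) → (∀ j ∈ N, LinearOrder A) → A)
    -- participation: a voter `i ∉ N` joining with order `L` weakly prefers the new outcome
    (hpart : ∀ (N : Finset ℕ) (i : ℕ), i ∉ N →
      ∀ (P : ∀ j ∈ N, LinearOrder A) (L : LinearOrder A),
        L.le (f N P)
          (f (insert i N) (fun j _ => if h : j ∈ N then P j h else L))) :
    -- half-way monotonicity on every electorate `N`
    ∀ (N : Finset ℕ) (P : ∀ j ∈ N, LinearOrder A) (i : ℕ) (hi : i ∈ N),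
      (P i hi).le
        (f N (fun j hj => if j = i then revOrder (P i hi) else P j hj))
        (f N P) := by
  intro N P i hi
  obtain ⟨M, hiM, rfl⟩ : ∃ M, i ∉ M ∧ insert i M = N :=
    ⟨N.erase i, Finset.notMem_erase i N, Finset.insert_erase hi⟩
  set Q : ∀ j ∈ M, LinearOrder A := fun j hj => P j (Finset.mem_insert_of_mem hj)
  have truthful : (P i hi).le (f M Q) (f (insert i M) P) := by
    have h : (P i hi).le (f M Q) (f (insert i M) (extendProfile Q i (P i hi))) :=
      hpart M i hiM Q (P i hi)
    rwa [extendProfile_restrict_self hiM] at h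
  have reversed :
      (P i hi).le (f (insert i M) (fun j hj => if j = i then revOrder (P i hi) else P j hj))
        (f M Q) := by
    have h : (revOrder (P i hi)).le (f M Q)
        (f (insert i M) (extendProfile Q i (revOrder (P i hi)))) :=
      hpart M i hiM Q (revOrder (P i hi))
    rwa [extendProfile_restrict hiM, revOrder_le_iff] at h
  exact (P i hi).le_trans _ _ _ reversed truthful

/-- If a variable-electorate voting rule `f` (assigning a winner to every profile on every
finite electorate `N ⊆ ℕ`) satisfies participation, then on every fixed electorate it
satisfies half-way monotonicity: voting truthfully is weakly better than reversing one's
preference ranking. -/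
theorem participation_implies_halfwayMonotonicity {A : Type*} [Fintype A]
    (f : (N : Finset ℕ) → (∀ j ∈ N, LinearOrder A) → A)
    -- participation: a voter `i ∉ N` joining with order `L` weakly prefers the new outcome
    (hpart : ∀ (N : Finset ℕ) (i : ℕ), i ∉ N →
      ∀ (P : ∀ j ∈ N, LinearOrder A) (L : LinearOrder A),
        L.le (f N P)
          (f (insert i N) (fun j _ => if h : j ∈ N then P j h else L))) :
    -- half-way monotonicity on every electorate `N`
    ∀ (N : Finset ℕ) (P : ∀ j ∈ N, LinearOrder A) (i : ℕ) (hi : i ∈ N),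
      (P i hi).le
        (f N (fun j hj => if j = i then revOrder (P i hi) else P j hj))
        (f N P) :=
  participation_implies_halfwayMonotonicity_general f hpart
end

section
/- Fix a number m of alternatives and let n ≥ 1. If there exists a Condorcet extension defined on electorates with n+2 voters which satisfies half-way monotonicity, then there also exists a Condorcet extension for n voters satisfying half-way monotonicity. -/
/-- `a` is the (unique) Condorcet winner of the profile `P`: for every other alternative `b`,
the number of voters preferring `a` to `b` (i.e. ranking `b` strictly below `a`) strictly
exceeds the number of voters preferring `b` to `a`. -/
def IsCondorcetWinner {A ι : Type*} (P : ι → LinearOrder A) (a : A) : Prop :=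
  ∀ b, b ≠ a → Nat.card {i // (P i).lt a b} < Nat.card {i // (P i).lt b a}

/-- A voting rule is a Condorcet extension if it selects the Condorcet winner whenever one
exists. -/
def CondorcetExtension {A ι : Type*} (f : (ι → LinearOrder A) → A) : Prop :=
  ∀ P a, IsCondorcetWinner P a → f P = a

/-- Half-way monotonicity: for every profile `P` and voter `i`, the outcome under truthful
voting is weakly preferred (w.r.t. `i`'s true order `P i`) to the outcome when `i` reverses
their preference ranking. -/
def HalfwayMonotone {A ι : Type*} [DecidableEq ι] (f : (ι → LinearOrder A) → A) : Prop :=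
  ∀ (P : ι → LinearOrder A) (i : ι),
    (P i).le (f (Function.update P i (revOrder (P i)))) (f P)

/-- Extend an `n`-voter profile by two voters with opposite orders `L` and `revOrder L`. -/
def extProfile {A : Type*} {n : ℕ} (L : LinearOrder A) (P : Fin n → LinearOrder A) :
    Fin (n + 2) → LinearOrder A :=
  fun j => if h : (j : ℕ) < n then P ⟨j, h⟩ else if (j : ℕ) = n then L else revOrder L

lemma extProfile_emb {A : Type*} {n : ℕ} (L : LinearOrder A) (P : Fin n → LinearOrder A)
    (i : Fin n) : extProfile L P (Fin.castLE (by omega) i) = P i := by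
  have h : ((Fin.castLE (by omega : n ≤ n + 2) i : Fin (n+2)) : ℕ) < n := i.isLt
  simp only [extProfile, dif_pos h]
  exact congrArg P (Fin.ext rfl)

lemma extProfile_update {A : Type*} {n : ℕ} (L : LinearOrder A) (P : Fin n → LinearOrder A)
    (i : Fin n) (r : LinearOrder A) :
    extProfile L (Function.update P i r) =
      Function.update (extProfile L P) (Fin.castLE (by omega) i) r := by
  funext j
  by_cases hj : j = Fin.castLE (by omega) i
  · subst hj
    rw [Function.update_self, extProfile_emb, Function.update_self]
  · rw [Function.update_of_ne hj]
    unfold extProfile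
    by_cases h1 : (j : ℕ) < n
    · rw [dif_pos h1, dif_pos h1, Function.update_of_ne]
      intro he
      apply hj
      apply Fin.ext
      have : ((⟨(j : ℕ), h1⟩ : Fin n) : ℕ) = (i : ℕ) := by rw [he]
      simpa using this
    · rw [dif_neg h1, dif_neg h1]

lemma count_ext {A : Type*} [Fintype A] {n : ℕ} (L : LinearOrder A) (P : Fin n → LinearOrder A)
    (x y : A) (hxy : x ≠ y) :
    Nat.card {j // (extProfile L P j).lt x y} = Nat.card {i // (P i).lt x y} + 1 := by
  classical
  rw [Nat.card_eq_fintype_card, Nat.card_eq_fintype_card, Fintype.card_subtype,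
    Fintype.card_subtype, Finset.card_filter, Finset.card_filter,
    Fin.sum_univ_castSucc, Fin.sum_univ_castSucc]
  have hsum : ∀ j : Fin n,
      (if (extProfile L P ((j.castSucc).castSucc)).lt x y then 1 else 0) =
      (if (P j).lt x y then (1:ℕ) else 0) := by
    intro j
    have h1 : (((j.castSucc).castSucc : Fin (n+2)) : ℕ) < n := j.isLt
    have he : extProfile L P ((j.castSucc).castSucc) = P j := by
      simp only [extProfile, dif_pos h1]
      exact congrArg P (Fin.ext rfl)
    rw [he]
  rw [Finset.sum_congr rfl (fun j _ => hsum j)]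
  have hn2 : extProfile L P ((Fin.last n).castSucc) = L := by
    have h1 : ¬ (((Fin.last n).castSucc : Fin (n+2)) : ℕ) < n := by simp
    have h2 : (((Fin.last n).castSucc : Fin (n+2)) : ℕ) = n := by simp
    simp only [extProfile, dif_neg h1, if_pos h2]
  have hn3 : extProfile L P (Fin.last (n+1)) = revOrder L := by
    have h1 : ¬ ((Fin.last (n+1) : Fin (n+2)) : ℕ) < n := by simp
    have h2 : ¬ ((Fin.last (n+1) : Fin (n+2)) : ℕ) = n := by simp
    simp only [extProfile, dif_neg h1, if_neg h2]
  rw [hn2, hn3]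
  have hrev : (revOrder L).lt x y ↔ L.lt y x := Iff.rfl
  rcases @lt_trichotomy A L x y with h | h | h
  · have h2 : ¬ (revOrder L).lt x y := hrev.not.mpr (@lt_asymm A _ _ _ h)
    rw [if_pos h, if_neg h2]
  · exact absurd h hxy
  · have h2 : ¬ L.lt x y := @lt_asymm A _ _ _ h
    rw [if_neg h2, if_pos (hrev.mpr h)]

/-- Induction step: if there is a Condorcet extension satisfying half-way monotonicity for
`n + 2` voters, then there is one for `n` voters (`n ≥ 1`), for a fixed finite set of
alternatives. -/
theorem condorcet_hwm_induction_step {A : Type*} [Fintype A] (n : ℕ) (hn : 1 ≤ n)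
    (h : ∃ f : (Fin (n + 2) → LinearOrder A) → A,
      CondorcetExtension f ∧ HalfwayMonotone f) :
    ∃ g : (Fin n → LinearOrder A) → A,
      CondorcetExtension g ∧ HalfwayMonotone g := by
  obtain ⟨f, hfc, hfm⟩ := h
  let L : LinearOrder A := LinearOrder.lift' (Fintype.equivFin A) (Fintype.equivFin A).injective
  refine ⟨fun P => f (extProfile L P), ?_, ?_⟩
  · intro P a ha
    apply hfc
    intro b hb
    rw [count_ext L P a b (fun he => hb he.symm), count_ext L P b a hb]
    have := ha b hb
    omega
  · intro P i
    have hm := hfm (extProfile L P) (Fin.castLE (by omega) i)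
    rw [extProfile_emb] at hm
    show (P i).le (f (extProfile L (Function.update P i (revOrder (P i))))) (f (extProfile L P))
    rw [extProfile_update]
    exact hm
end

section
/- For m ≥ 4 alternatives and every odd number n ≥ 15 of voters, there does not exist a Condorcet extension satisfying half-way monotonicity. -/
/-! Fix four alternatives `a₀, …, a₃` and let every ballot rank all other alternatives below
them. Fifteen base voters have fixed rankings of the four; the remaining `n - 15` voters come in
pairs with mutually reverse rankings of the four, so they cancel in every comparison among
`a₀, …, a₃` and only strengthen the four against the rest. Let `P_S` be the profile in which the
base voters in `S` reverse their ballots. Condorcet consistency fixes the outcome of six such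
profiles, and half-way monotonicity for voter `v ∉ S` says that `f(P_{S ∪ {v}})` is at most
`f(P_S)` in `v`'s base ballot. Since nothing outside the four lies above any of them in a base
ballot, only the label of an outcome (`aᵢ`, or `⊥` for anything else) matters, and the
resulting finite system of constraints on the labels has no solution. -/

open Finset

namespace HalfwayMonotonicity

lemma revOrder_lt_iff {A : Type*} (L : LinearOrder A) (x y : A) :
    (revOrder L).lt x y ↔ L.lt y x := Iff.rfl

def baseHeights : Fin 15 → Fin 4 → ℕ :=
  ![![1, 0, 2, 3], ![1, 0, 2, 3], ![3, 2, 0, 1], ![3, 2, 0, 1], ![3, 2, 0, 1],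
    ![0, 3, 1, 2], ![1, 2, 3, 0], ![3, 2, 0, 1], ![2, 0, 3, 1], ![1, 0, 2, 3],
    ![2, 1, 3, 0], ![2, 1, 3, 0], ![0, 3, 1, 2], ![1, 0, 2, 3], ![1, 3, 0, 2]]

/-- `heights j a` is the height of the special alternative `a` in voter `j`'s ballot (`3` is the
top). -/
def heights (j : ℕ) : Fin 4 → ℕ :=
  if h : j < 15 then baseHeights ⟨j, h⟩ else if Even j then ![3, 2, 1, 0] else ![0, 1, 2, 3]

lemma heights_injective (j : ℕ) : Function.Injective (heights j) := by
  unfold heights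
  split_ifs
  · exact (by decide : ∀ k, Function.Injective (baseHeights k)) _
  all_goals decide

lemma heights_padding_lt_iff (k : ℕ) {a b : Fin 4} (hab : a ≠ b) :
    heights (15 + 2 * k + 1) a < heights (15 + 2 * k + 1) b ↔
      ¬ heights (15 + 2 * k) a < heights (15 + 2 * k) b := by
  have hodd : ¬ Even (15 + 2 * k) := by simp [parity_simps]
  have heven : Even (15 + 2 * k + 1) := by simp [parity_simps]
  simp only [heights, dif_neg (by omega : ¬ 15 + 2 * k < 15),
    dif_neg (by omega : ¬ 15 + 2 * k + 1 < 15), if_pos heven, if_neg hodd]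
  revert a b
  decide

def baseSupport (S : Finset ℕ) (a b : Fin 4) : ℕ :=
  #{j ∈ range 15 | if j ∈ S then heights j a < heights j b else heights j b < heights j a}

def IsBaseCondorcetWinner (S : Finset ℕ) (w : Fin 4) : Prop :=
  S ⊆ range 15 ∧ 2 * #S < 15 ∧ ∀ z, z ≠ w → baseSupport S z w < baseSupport S w z

instance (S : Finset ℕ) (w : Fin 4) : Decidable (IsBaseCondorcetWinner S w) := by
  unfold IsBaseCondorcetWinner
  infer_instance

set_option synthInstance.maxSize 1000 in
theorem no_condorcet_hwm_labeling :
    ¬ ∃ L : Finset ℕ → WithBot (Fin 4), (∀ S w, IsBaseCondorcetWinner S w → L S = w) ∧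
      ∀ v S T, v < 15 ∧ v ∉ S ∧ insert v S = T →
        (L T).map (heights v) ≤ (L S).map (heights v) := by
  rintro ⟨L, hcw, hhwm⟩
  have := hhwm 3 {2, 5} {2, 3, 5} (by decide)
  have := hhwm 1 {0, 2, 5} {0, 1, 2, 5} (by decide)
  have := hhwm 0 {2, 5} {0, 2, 5} (by decide)
  have := hhwm 5 {2} {2, 5} (by decide)
  have := hhwm 3 {2, 14} {2, 3, 14} (by decide)
  have := hhwm 5 {0, 1, 14} {0, 1, 5, 14} (by decide)
  have := hhwm 8 {0, 1} {0, 1, 8} (by decide)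
  have := hhwm 14 {0, 1} {0, 1, 14} (by decide)
  have := hhwm 1 {0, 14} {0, 1, 14} (by decide)
  have := hhwm 0 {14} {0, 14} (by decide)
  have := hhwm 2 {14} {2, 14} (by decide)
  have := hhwm 14 ∅ {14} (by decide)
  have := hhwm 11 {2, 8, 10} {2, 8, 10, 11} (by decide)
  have := hhwm 10 {2, 8} {2, 8, 10} (by decide)
  have := hhwm 8 {2} {2, 8} (by decide)
  have := hhwm 2 {8} {2, 8} (by decide)
  have := hhwm 1 {0, 8} {0, 1, 8} (by decide)
  have := hhwm 0 {8} {0, 8} (by decide)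
  have := hhwm 8 ∅ {8} (by decide)
  rw [hcw {0, 1, 8} 0 (by decide), hcw {2, 3, 5} 3 (by decide), hcw {2, 3, 14} 3 (by decide),
    hcw {0, 1, 2, 5} 2 (by decide), hcw {0, 1, 5, 14} 2 (by decide),
    hcw {2, 8, 10, 11} 1 (by decide)] at *
  generalize L ∅ = l at *
  generalize L {8} = l8 at *
  generalize L {0, 8} = l08 at *
  generalize L {2} = l2 at *
  generalize L {2, 8} = l28 at *
  generalize L {2, 8, 10} = l2810 at *
  generalize L {14} = l14 at *
  generalize L {2, 14} = l214 at *
  generalize L {0, 14} = l014 at *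
  generalize L {0, 1} = l01 at *
  generalize L {0, 1, 14} = l0114 at *
  generalize L {2, 5} = l25 at *
  generalize L {0, 2, 5} = l025 at *
  clear hcw hhwm L
  -- Reverting in this order puts each label right before the constraints on it, so the
  -- kernel's evaluation prunes. The forced values are `l25 = 3`, `l0114 = 2`, `l14 = 3`,
  -- `l28 = 1`, `l8 = 0`, after which voters 14 and 8 leave no room for `l`.
  revert l l8 l08 l2 l28 l2810 l14 l214 l014 l01 l0114 l25 l025
  decide +kernel

lemma natCard_subtype_fin_eq_card_filter_range (N : ℕ) (q : ℕ → Prop) [DecidablePred q] :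
    Nat.card {i : Fin N // q i} = #{j ∈ range N | q j} := by
  rw [Nat.card_eq_fintype_card, Fintype.card_subtype, card_filter, card_filter,
    Fin.sum_univ_eq_sum_range (fun j => if q j then 1 else 0)]

lemma card_filter_range_add_two_mul (q : ℕ → Prop) [DecidablePred q] (b t : ℕ)
    (hq : ∀ k, q (b + 2 * k + 1) ↔ ¬ q (b + 2 * k)) :
    #{j ∈ range (b + 2 * t) | q j} = #{j ∈ range b | q j} + t := by
  induction t with
  | zero => simp
  | succ t ih =>
    rw [card_filter] at ih ⊢
    rw [show b + 2 * (t + 1) = b + 2 * t + 1 + 1 by ring, sum_range_succ, sum_range_succ, ih]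
    have := hq t
    split_ifs <;> tauto

section Ballots

variable {A : Type*} {m : ℕ} (e : A ≃ Fin m)

def label (x : A) : WithBot (Fin 4) :=
  if h : (e x : ℕ) < 4 then ((⟨e x, h⟩ : Fin 4) : WithBot (Fin 4)) else ⊥

/-- The special alternatives `e.symm 0, …, e.symm 3` sit above all others and are ordered by `h`;
the others are ordered by `e`. -/
def rank (h : Fin 4 → ℕ) (x : A) : ℕ :=
  if hx : (e x : ℕ) < 4 then m + h ⟨e x, hx⟩ else e x

lemma rank_injective {h : Fin 4 → ℕ} (hh : Function.Injective h) :
    Function.Injective (rank e h) := by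
  intro x y hxy
  refine e.injective (Fin.ext ?_)
  have := (e x).isLt
  have := (e y).isLt
  unfold rank at hxy
  split_ifs at hxy with hx hy hy
  · simpa using hh (by omega : h ⟨e x, hx⟩ = h ⟨e y, hy⟩)
  all_goals omega

abbrev ballot {h : Fin 4 → ℕ} (hh : Function.Injective h) : LinearOrder A :=
  LinearOrder.lift' (rank e h) (rank_injective e hh)

lemma map_label_le_of_le {h : Fin 4 → ℕ} (hh : Function.Injective h) {x y : A}
    (hxy : (ballot e hh).le x y) : (label e x).map h ≤ (label e y).map h := by
  change rank e h x ≤ rank e h y at hxy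
  unfold label rank at *
  split_ifs at * <;> simp <;> omega

lemma rank_lt_of_label_eq_bot (h : Fin 4 → ℕ) {x : A} (hx : label e x = ⊥) : rank e h x < m := by
  unfold label rank at *
  split_ifs at * with h4
  · simp at hx
  · exact (e x).isLt

variable (hm : 4 ≤ m)

def special (i : Fin 4) : A := e.symm (Fin.castLE hm i)

@[simp]
lemma label_special (i : Fin 4) : label e (special e hm i) = i := by
  simp [label, special]

@[simp]
lemma rank_special (h : Fin 4 → ℕ) (i : Fin 4) : rank e h (special e hm i) = m + h i := by
  simp [rank, special]

lemma exists_eq_special_or_label_eq_bot (x : A) :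
    (∃ i, x = special e hm i) ∨ label e x = ⊥ := by
  unfold label
  split_ifs with hx
  · exact Or.inl ⟨⟨e x, hx⟩, by simp [special]⟩
  · exact Or.inr rfl

end Ballots

section Profiles

variable {A : Type*} {m : ℕ} (e : A ≃ Fin m) {n : ℕ}

abbrev voterBallot (j : ℕ) : LinearOrder A := ballot e (heights_injective j)

abbrev profile (S : Finset ℕ) (i : Fin n) : LinearOrder A :=
  if (i : ℕ) ∈ S then revOrder (voterBallot e i) else voterBallot e i

lemma profile_of_mem {S : Finset ℕ} {i : Fin n} (hi : (i : ℕ) ∈ S) :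
    profile e S i = revOrder (voterBallot e i) := if_pos hi

lemma profile_of_notMem {S : Finset ℕ} {i : Fin n} (hi : (i : ℕ) ∉ S) :
    profile e S i = voterBallot e i := if_neg hi

lemma voterBallot_lt_iff (j : ℕ) (x y : A) :
    (voterBallot e j).lt x y ↔ rank e (heights j) x < rank e (heights j) y := Iff.rfl

lemma update_profile {S : Finset ℕ} {i : Fin n} (hi : (i : ℕ) ∉ S) :
    Function.update (profile e S) i (revOrder (profile e S i)) = profile e (insert (i : ℕ) S) := by
  funext k
  rcases eq_or_ne k i with rfl | hk
  · simp [profile, hi]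
  · simp [profile, hk, Fin.val_ne_of_ne hk]

lemma _root_.HalfwayMonotone.le_profile_insert {f : (Fin n → LinearOrder A) → A}
    (hf : HalfwayMonotone f) {S : Finset ℕ} {i : Fin n} (hi : (i : ℕ) ∉ S) :
    (voterBallot e i).le (f (profile e (insert (i : ℕ) S))) (f (profile e S)) := by
  have := hf (profile e S) i
  rwa [update_profile e hi, profile_of_notMem e hi] at this

variable (hm : 4 ≤ m)

lemma profile_special_lt_special_iff (S : Finset ℕ) (i : Fin n) (a b : Fin 4) :
    (profile e S i).lt (special e hm a) (special e hm b) ↔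
      if (i : ℕ) ∈ S then heights i b < heights i a else heights i a < heights i b := by
  by_cases hi : (i : ℕ) ∈ S
  · rw [profile_of_mem e hi, revOrder_lt_iff, voterBallot_lt_iff]
    simp [hi]
  · rw [profile_of_notMem e hi, voterBallot_lt_iff]
    simp [hi]

lemma profile_special_lt_iff_mem (S : Finset ℕ) (i : Fin n) (a : Fin 4) {b : A}
    (hb : label e b = ⊥) : (profile e S i).lt (special e hm a) b ↔ (i : ℕ) ∈ S := by
  have := rank_lt_of_label_eq_bot e (heights i) hb
  by_cases hi : (i : ℕ) ∈ S
  · rw [profile_of_mem e hi, revOrder_lt_iff, voterBallot_lt_iff, rank_special]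
    simp only [hi, iff_true]
    omega
  · rw [profile_of_notMem e hi, voterBallot_lt_iff, rank_special]
    simp only [hi, iff_false]
    omega

lemma profile_lt_special_iff_notMem (S : Finset ℕ) (i : Fin n) (a : Fin 4) {b : A}
    (hb : label e b = ⊥) : (profile e S i).lt b (special e hm a) ↔ (i : ℕ) ∉ S := by
  have := rank_lt_of_label_eq_bot e (heights i) hb
  by_cases hi : (i : ℕ) ∈ S
  · rw [profile_of_mem e hi, revOrder_lt_iff, voterBallot_lt_iff, rank_special]
    simp only [hi, not_true_eq_false, iff_false]
    omega
  · rw [profile_of_notMem e hi, voterBallot_lt_iff, rank_special]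
    simp only [hi, not_false_eq_true, iff_true]
    omega

lemma card_profile_lt_special {t : ℕ} {S : Finset ℕ} (hS : S ⊆ range 15) {a b : Fin 4}
    (hab : a ≠ b) :
    Nat.card {i : Fin (15 + 2 * t) // (profile e S i).lt (special e hm a) (special e hm b)} =
      baseSupport S b a + t := by
  simp_rw [profile_special_lt_special_iff]
  rw [natCard_subtype_fin_eq_card_filter_range _
    fun j => if j ∈ S then heights j b < heights j a else heights j a < heights j b]
  refine card_filter_range_add_two_mul _ 15 t fun k => ?_
  have hpad : ∀ j, 15 ≤ j → j ∉ S := fun j hj hjS => by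
    have := mem_range.1 (hS hjS)
    omega
  simp only [if_neg (hpad _ (by omega : 15 ≤ 15 + 2 * k)),
    if_neg (hpad _ (by omega : 15 ≤ 15 + 2 * k + 1))]
  exact heights_padding_lt_iff k hab

theorem isCondorcetWinner_profile {t : ℕ} {S : Finset ℕ} {w : Fin 4}
    (hw : IsBaseCondorcetWinner S w) :
    IsCondorcetWinner (profile e S : Fin (15 + 2 * t) → LinearOrder A) (special e hm w) := by
  obtain ⟨hS, hcard, hbeats⟩ := hw
  intro b hbw
  rcases exists_eq_special_or_label_eq_bot e hm b with ⟨z, rfl⟩ | hb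
  · have hzw : z ≠ w := fun h => hbw (h ▸ rfl)
    rw [card_profile_lt_special e hm hS hzw.symm, card_profile_lt_special e hm hS hzw]
    have := hbeats z hzw
    omega
  · simp_rw [profile_special_lt_iff_mem e hm _ _ _ hb,
      profile_lt_special_iff_notMem e hm _ _ _ hb]
    rw [natCard_subtype_fin_eq_card_filter_range _ (· ∈ S),
      natCard_subtype_fin_eq_card_filter_range _ (· ∉ S)]
    have hsplit := card_filter_add_card_filter_not (s := range (15 + 2 * t)) (· ∈ S)
    have hle : #{j ∈ range (15 + 2 * t) | j ∈ S} ≤ #S :=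
      card_le_card fun j hj => (mem_filter.1 hj).2
    simp only [card_range] at hsplit
    omega

end Profiles

end HalfwayMonotonicity

open HalfwayMonotonicity in
/-- For at least 4 alternatives and any odd number `n ≥ 15` of voters, no Condorcet
extension satisfies half-way monotonicity. -/
theorem no_condorcet_hwm_odd {A : Type*} [Fintype A] (hA : 4 ≤ Fintype.card A)
    (n : ℕ) (hodd : Odd n) (hn : 15 ≤ n) :
    ¬ ∃ f : (Fin n → LinearOrder A) → A,
        CondorcetExtension f ∧ HalfwayMonotone f := by
  rintro ⟨f, hCE, hHW⟩
  obtain ⟨t, rfl⟩ : ∃ t, n = 15 + 2 * t := by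
    obtain ⟨k, rfl⟩ := hodd
    exact ⟨k - 7, by omega⟩
  have e := Fintype.equivFin A
  refine no_condorcet_hwm_labeling ⟨fun S => label e (f (profile e S)), fun S w hw => ?_,
    fun v S T ⟨hv, hvS, hT⟩ => ?_⟩
  · dsimp only
    rw [hCE _ _ (isCondorcetWinner_profile e hA hw), label_special]
  · subst hT
    exact map_label_le_of_le e _ (hHW.le_profile_insert e (i := ⟨v, by omega⟩) hvS)
end

section
/- Let A = {a,b,c,d} (4 alternatives) and n = 15 voters, and let P₀ be any profile in which 1 voter reports a≻b≻c≻d, 3 voters report a≻b≻d≻c, 3 voters report b≻d≻c≻a, 4 voters report c≻a≻b≻d, 2 voters report d≻c≻a≻b, and 2 voters report d≻c≻b≻a. If f is a Condorcet extension for 15 voters satisfying half-way monotonicity, then f(P₀) ∈ {c, d}. -/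
/-- Voter with linear order `L` reports the ranking `w ≻ x ≻ y ≻ z`. -/
def Reports4 {A : Type*} (L : LinearOrder A) (w x y z : A) : Prop :=
  L.lt x w ∧ L.lt y x ∧ L.lt z y

/-!
Let one `d ≻ c ≻ b ≻ a` voter reverse her ranking, giving `Q`. Half-way monotonicity gives
`f P₀ ≽ f Q` for that voter, so it suffices to show `f Q ∈ {c, d}`. Voters sharing a ranking can be
reversed one at a time and the half-way monotonicity steps chained, as they are all measured in the
same order. Reversing two further `b ≻ d ≻ c ≻ a` voters makes `c` the Condorcet winner, so
`f Q ≽ c` in that ranking and `f Q ≠ a`. Reversing instead one `d ≻ c ≻ a ≻ b` voter (giving `R`)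
and then two `c ≻ a ≻ b ≻ d` voters makes `a` the Condorcet winner, so `f R ∈ {c, a}`; then
`f Q ≽ f R` in `d ≻ c ≻ a ≻ b` rules out `f Q = b`.
-/

section Profiles

variable {A ι : Type*}

@[simp]
theorem revOrder_lt {L : LinearOrder A} {x y : A} : (revOrder L).lt x y ↔ L.lt y x := Iff.rfl

@[simp]
theorem revOrder_revOrder (L : LinearOrder A) : revOrder (revOrder L) = L :=
  LinearOrder.ext fun _ _ => Iff.rfl

/-- The number of voters ranking `x` above `y`. -/
noncomputable def prefCount (P : ι → LinearOrder A) (x y : A) : ℕ :=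
  {i | (P i).lt y x}.ncard

theorem prefCount_add_prefCount [Finite ι] (P : ι → LinearOrder A) {x y : A} (hxy : x ≠ y) :
    prefCount P x y + prefCount P y x = Nat.card ι := by
  have hcover : {i | (P i).lt y x} ∪ {i | (P i).lt x y} = Set.univ :=
    Set.eq_univ_of_forall fun i => by
      let := P i
      exact (lt_or_gt_of_ne hxy).symm
  have hdisj : Disjoint {i | (P i).lt y x} {i | (P i).lt x y} :=
    Set.disjoint_left.2 fun i h h' => by
      let := P i
      exact lt_asymm h h'
  rw [prefCount, prefCount, ← Set.ncard_union_eq hdisj, hcover, Set.ncard_univ]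

theorem isCondorcetWinner_of_lt_two_mul [Finite ι] {P : ι → LinearOrder A} {w : A}
    (h : ∀ x, x ≠ w → Nat.card ι < 2 * prefCount P w x) : IsCondorcetWinner P w := by
  intro x hx
  have := prefCount_add_prefCount P hx
  change prefCount P x w < prefCount P w x
  have := h x hx
  omega

theorem sum_map_ncard_le_ncard [Finite ι] {S : Set ι} {l : List (Set ι)}
    (hl : l.Pairwise Disjoint) (hS : ∀ T ∈ l, T ⊆ S) : (l.map Set.ncard).sum ≤ S.ncard := by
  induction l generalizing S with
  | nil => simp
  | cons T l ih =>
    rw [List.pairwise_cons] at hl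
    have hT : T ⊆ S := hS T List.mem_cons_self
    have hrest : (l.map Set.ncard).sum ≤ (S \ T).ncard := ih hl.2 fun T' hT' =>
      Set.subset_sdiff.2 ⟨hS T' (List.mem_cons_of_mem _ hT'), (hl.1 T' hT').symm⟩
    rw [List.map_cons, List.sum_cons, ← Set.ncard_sdiff_add_ncard_of_subset hT]
    omega

section Reversal

variable [DecidableEq ι]

def reverseVoters (P : ι → LinearOrder A) (S : Finset ι) : ι → LinearOrder A :=
  fun i => if i ∈ S then revOrder (P i) else P i

variable {P : ι → LinearOrder A} {S : Finset ι} {i : ι}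

theorem reverseVoters_of_mem (h : i ∈ S) : reverseVoters P S i = revOrder (P i) := if_pos h

theorem reverseVoters_of_notMem (h : i ∉ S) : reverseVoters P S i = P i := if_neg h

theorem reverseVoters_insert (h : i ∉ S) :
    reverseVoters P (insert i S) = Function.update (reverseVoters P S) i (revOrder (P i)) := by
  ext1 j
  rcases eq_or_ne j i with rfl | hj
  · simp [reverseVoters]
  · simp [reverseVoters, hj]

@[simp]
theorem reverseVoters_reverseVoters : reverseVoters (reverseVoters P S) S = P := by
  ext1 j
  by_cases hj : j ∈ S <;> simp [reverseVoters, hj]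

theorem reverseVoters_eq_of_forall_eq {L L' : LinearOrder A} {T : Finset ι}
    (hS : ∀ i ∈ S, P i = L') (hT : ∀ i ∈ T, P i = L) (hLL' : L ≠ L') :
    ∀ i ∈ T, reverseVoters P S i = L := fun i hi => by
  have hiS : i ∉ S := fun hiS => hLL' ((hT i hi).symm.trans (hS i hiS))
  rw [reverseVoters_of_notMem hiS, hT i hi]

theorem HalfwayMonotone.le_reverseVoters {f : (ι → LinearOrder A) → A} (hf : HalfwayMonotone f)
    (P : ι → LinearOrder A) {S : Finset ι} {L : LinearOrder A} (hS : ∀ i ∈ S, P i = L) :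
    L.le (f (reverseVoters P S)) (f P) := by
  induction S using Finset.induction_on with
  | empty => exact L.le_refl _
  | insert j S hj ih =>
    have hPj : P j = L := hS j (Finset.mem_insert_self j S)
    have step := hf (reverseVoters P S) j
    rw [reverseVoters_of_notMem hj, ← reverseVoters_insert hj, hPj] at step
    exact step.trans (ih fun i hi => hS i (Finset.mem_insert_of_mem hi))

theorem HalfwayMonotone.le_of_isCondorcetWinner {f : (ι → LinearOrder A) → A}
    (hf : HalfwayMonotone f) (hc : CondorcetExtension f) {L : LinearOrder A}
    (hS : ∀ i ∈ S, P i = L) {w : A} (hw : IsCondorcetWinner (reverseVoters P S) w) :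
    L.le w (f P) :=
  hc _ _ hw ▸ hf.le_reverseVoters P hS

variable [Finite ι] {L : LinearOrder A} {x y : A}

theorem prefCount_reverseVoters_add_card (hS : ∀ i ∈ S, P i = L) (hL : L.lt y x) :
    prefCount (reverseVoters P S) x y + S.card = prefCount P x y := by
  have hsplit : {i | (P i).lt y x} = {i | (reverseVoters P S i).lt y x} ∪ ↑S := by
    ext i
    by_cases hi : i ∈ S
    · simp only [Set.mem_union, Set.mem_ofPred_eq, Finset.mem_coe, hi, or_true, iff_true]
      rw [hS i hi]
      exact hL
    · simp only [Set.mem_union, Set.mem_ofPred_eq, Finset.mem_coe, hi, or_false]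
      rw [reverseVoters_of_notMem hi]
  have hdisj : Disjoint {i | (reverseVoters P S i).lt y x} ↑S :=
    Set.disjoint_right.2 fun i hi h => by
      rw [Set.mem_ofPred_eq, reverseVoters_of_mem hi, hS i hi, revOrder_lt] at h
      exact h.asymm hL
  rw [prefCount, prefCount, hsplit, Set.ncard_union_eq hdisj, Set.ncard_coe_finset]

theorem prefCount_reverseVoters_eq_add_card (hS : ∀ i ∈ S, P i = L) (hL : L.lt x y) :
    prefCount (reverseVoters P S) x y = prefCount P x y + S.card := by
  have hS' : ∀ i ∈ S, reverseVoters P S i = revOrder L := fun i hi => by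
    rw [reverseVoters_of_mem hi, hS i hi]
  simpa using (prefCount_reverseVoters_add_card hS' hL).symm

end Reversal

end Profiles

section Rankings

variable {A ι : Type*} {L : LinearOrder A} {w x y z : A}

theorem Reports4.lt_iff (hall : ∀ u, u = w ∨ u = x ∨ u = y ∨ u = z) (h : Reports4 L w x y z)
    {u v : A} : L.lt u v ↔ (u = z ∧ v ≠ z) ∨ (u = y ∧ (v = x ∨ v = w)) ∨ (u = x ∧ v = w) := by
  unfold Reports4 at h
  rcases hall u with rfl | rfl | rfl | rfl <;> rcases hall v with rfl | rfl | rfl | rfl <;> grind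

theorem Reports4.eq {L' : LinearOrder A} (hall : ∀ u, u = w ∨ u = x ∨ u = y ∨ u = z)
    (h : Reports4 L w x y z) (h' : Reports4 L' w x y z) : L = L' :=
  LinearOrder.ext_lt fun _ _ => (h.lt_iff hall).trans (h'.lt_iff hall).symm

theorem Reports4.le_second_iff (hall : ∀ u, u = w ∨ u = x ∨ u = y ∨ u = z)
    (h : Reports4 L w x y z) {u : A} : L.le x u ↔ u = w ∨ u = x := by
  unfold Reports4 at h
  rcases hall u with rfl | rfl | rfl | rfl <;> grind

theorem Reports4.le_third_iff (hall : ∀ u, u = w ∨ u = x ∨ u = y ∨ u = z)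
    (h : Reports4 L w x y z) {u : A} : L.le y u ↔ u ≠ z := by
  unfold Reports4 at h
  rcases hall u with rfl | rfl | rfl | rfl <;> grind

theorem Reports4.eq_or_eq_of_le (hall : ∀ u, u = w ∨ u = x ∨ u = y ∨ u = z)
    (h : Reports4 L w x y z) {u v : A} (huv : L.le u v) (hu : u = w ∨ u = x) : v = w ∨ v = x :=
  (h.le_second_iff hall).1 (((h.le_second_iff hall).2 hu).trans huv)

theorem Reports4.ne_fourth_of_le (hall : ∀ u, u = w ∨ u = x ∨ u = y ∨ u = z)
    (h : Reports4 L w x y z) {u v : A} (huv : L.le u v) (hu : u ≠ z) : v ≠ z :=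
  (h.le_third_iff hall).1 (((h.le_third_iff hall).2 hu).trans huv)

theorem Reports4.second_lt_first (h : Reports4 L w x y z) : L.lt x w := h.1

theorem Reports4.third_lt_second (h : Reports4 L w x y z) : L.lt y x := h.2.1

theorem Reports4.fourth_lt_third (h : Reports4 L w x y z) : L.lt z y := h.2.2

theorem Reports4.third_lt_first (h : Reports4 L w x y z) : L.lt y w :=
  h.2.1.trans h.1

theorem Reports4.fourth_lt_second (h : Reports4 L w x y z) : L.lt z x :=
  h.2.2.trans h.2.1

theorem Reports4.fourth_lt_first (h : Reports4 L w x y z) : L.lt z w :=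
  h.fourth_lt_second.trans h.1

theorem LinearOrder.ne_of_lt_of_lt {L' : LinearOrder A} {u v : A} (h : L.lt u v)
    (h' : L'.lt v u) : L ≠ L' := by
  rintro rfl
  exact h.asymm h'

theorem exists_finset_forall_eq_of_reports4 [Finite ι] {P : ι → LinearOrder A}
    (hall : ∀ u, u = w ∨ u = x ∨ u = y ∨ u = z) {n : ℕ} (hn : 0 < n)
    (h : n ≤ Nat.card {i // Reports4 (P i) w x y z}) :
    ∃ S : Finset ι, ∃ L : LinearOrder A, Reports4 L w x y z ∧ (∀ i ∈ S, P i = L) ∧ S.card = n := by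
  obtain ⟨T, hT, hTcard⟩ := Set.exists_subset_card_eq (s := {i | Reports4 (P i) w x y z}) h
  obtain ⟨i₀, hi₀⟩ := Set.nonempty_of_ncard_ne_zero (hTcard ▸ hn.ne')
  refine ⟨T.toFinite.toFinset, P i₀, hT hi₀, fun i hi => ?_, ?_⟩
  · exact Reports4.eq hall (hT (by simpa using hi)) (hT hi₀)
  · rw [← Set.ncard_eq_toFinset_card, hTcard]

end Rankings

section ProfileP₀

variable {A : Type*}

structure IsProfileP₀ (P : Fin 15 → LinearOrder A) (a b c d : A) : Prop where
  card_abcd : Nat.card {i // Reports4 (P i) a b c d} = 1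
  card_abdc : Nat.card {i // Reports4 (P i) a b d c} = 3
  card_bdca : Nat.card {i // Reports4 (P i) b d c a} = 3
  card_cabd : Nat.card {i // Reports4 (P i) c a b d} = 4
  card_dcab : Nat.card {i // Reports4 (P i) d c a b} = 2
  card_dcba : Nat.card {i // Reports4 (P i) d c b a} = 2

namespace IsProfileP₀

variable {P : Fin 15 → LinearOrder A} {a b c d : A}

theorem le_prefCount (hP : IsProfileP₀ P a b c d) :
    11 ≤ prefCount P c a ∧ 8 ≤ prefCount P c b ∧ 5 ≤ prefCount P c d ∧
      10 ≤ prefCount P a b ∧ 4 ≤ prefCount P a c ∧ 8 ≤ prefCount P a d := by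
  let T (w x y z : A) : Set (Fin 15) := {i | Reports4 (P i) w x y z}
  have bound {x y : A} (l : List (Set (Fin 15))) (hl : l.Pairwise Disjoint)
      (hT : ∀ T ∈ l, ∀ i ∈ T, (P i).lt y x) : (l.map Set.ncard).sum ≤ prefCount P x y :=
    sum_map_ncard_le_ncard hl hT
  have h₁ : (T a b c d).ncard = 1 := hP.card_abcd
  have h₂ : (T a b d c).ncard = 3 := hP.card_abdc
  have h₃ : (T b d c a).ncard = 3 := hP.card_bdca
  have h₄ : (T c a b d).ncard = 4 := hP.card_cabd
  have h₅ : (T d c a b).ncard = 2 := hP.card_dcab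
  have h₆ : (T d c b a).ncard = 2 := hP.card_dcba
  -- Distinct rankings disagree on some pair, so their classes of voters are disjoint.
  refine ⟨(bound [T b d c a, T c a b d, T d c a b, T d c b a] ?_ ?_).trans' ?_,
    (bound [T c a b d, T d c a b, T d c b a] ?_ ?_).trans' ?_,
    (bound [T a b c d, T c a b d] ?_ ?_).trans' ?_,
    (bound [T a b c d, T a b d c, T c a b d, T d c a b] ?_ ?_).trans' ?_,
    (bound [T a b c d, T a b d c] ?_ ?_).trans' ?_,
    (bound [T a b c d, T a b d c, T c a b d] ?_ ?_).trans' ?_⟩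
  all_goals
    simp only [List.pairwise_cons, List.mem_cons, List.not_mem_nil, or_false, forall_eq_or_imp,
      forall_eq, List.Pairwise.nil, and_true, List.map_cons, List.map_nil, List.sum_cons,
      List.sum_nil, h₁, h₂, h₃, h₄, h₅, h₆]
    try and_intros
  all_goals first
    | exact Set.disjoint_left.2 fun i ⟨_, _, _⟩ ⟨_, _, _⟩ => by let := P i; order
    | exact fun i ⟨_, _, _⟩ => by let := P i; order
    | norm_num

theorem isCondorcetWinner_c (hP : IsProfileP₀ P a b c d)
    (hall : ∀ x, x = a ∨ x = b ∨ x = c ∨ x = d) {S₁ S₂ : Finset (Fin 15)} {L₁ L₂ : LinearOrder A}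
    (hL₁ : Reports4 L₁ d c b a) (hS₁ : ∀ i ∈ S₁, P i = L₁) (h₁ : S₁.card = 1)
    (hL₂ : Reports4 L₂ b d c a) (hS₂ : ∀ i ∈ S₂, reverseVoters P S₁ i = L₂) (h₂ : S₂.card = 2) :
    IsCondorcetWinner (reverseVoters (reverseVoters P S₁) S₂) c := by
  obtain ⟨nca, ncb, ncd, -, -, -⟩ := hP.le_prefCount
  refine isCondorcetWinner_of_lt_two_mul fun x hx => ?_
  rw [Nat.card_eq_fintype_card, Fintype.card_fin]
  rcases hall x with rfl | rfl | rfl | rfl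
  · have := prefCount_reverseVoters_add_card hS₁ hL₁.fourth_lt_second
    have := prefCount_reverseVoters_add_card hS₂ hL₂.fourth_lt_third
    omega
  · have := prefCount_reverseVoters_add_card hS₁ hL₁.third_lt_second
    have := prefCount_reverseVoters_eq_add_card hS₂ hL₂.third_lt_first
    omega
  · exact absurd rfl hx
  · have := prefCount_reverseVoters_eq_add_card hS₁ hL₁.second_lt_first
    have := prefCount_reverseVoters_eq_add_card hS₂ hL₂.third_lt_second
    omega

theorem isCondorcetWinner_a (hP : IsProfileP₀ P a b c d)
    (hall : ∀ x, x = a ∨ x = b ∨ x = c ∨ x = d) {S₁ S₂ S₃ : Finset (Fin 15)}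
    {L₁ L₂ L₃ : LinearOrder A}
    (hL₁ : Reports4 L₁ d c b a) (hS₁ : ∀ i ∈ S₁, P i = L₁) (h₁ : S₁.card = 1)
    (hL₂ : Reports4 L₂ d c a b) (hS₂ : ∀ i ∈ S₂, reverseVoters P S₁ i = L₂) (h₂ : S₂.card = 1)
    (hL₃ : Reports4 L₃ c a b d) (hS₃ : ∀ i ∈ S₃, reverseVoters (reverseVoters P S₁) S₂ i = L₃)
    (h₃ : S₃.card = 2) :
    IsCondorcetWinner (reverseVoters (reverseVoters (reverseVoters P S₁) S₂) S₃) a := by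
  obtain ⟨-, -, -, nab, nac, nad⟩ := hP.le_prefCount
  refine isCondorcetWinner_of_lt_two_mul fun x hx => ?_
  rw [Nat.card_eq_fintype_card, Fintype.card_fin]
  rcases hall x with rfl | rfl | rfl | rfl
  · exact absurd rfl hx
  · have := prefCount_reverseVoters_eq_add_card hS₁ hL₁.fourth_lt_third
    have := prefCount_reverseVoters_add_card hS₂ hL₂.fourth_lt_third
    have := prefCount_reverseVoters_add_card hS₃ hL₃.third_lt_second
    omega
  · have := prefCount_reverseVoters_eq_add_card hS₁ hL₁.fourth_lt_second
    have := prefCount_reverseVoters_eq_add_card hS₂ hL₂.third_lt_second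
    have := prefCount_reverseVoters_eq_add_card hS₃ hL₃.second_lt_first
    omega
  · have := prefCount_reverseVoters_eq_add_card hS₁ hL₁.fourth_lt_first
    have := prefCount_reverseVoters_eq_add_card hS₂ hL₂.third_lt_first
    have := prefCount_reverseVoters_add_card hS₃ hL₃.fourth_lt_second
    omega

variable {f : (Fin 15 → LinearOrder A) → A}

theorem apply_reverseVoters_ne_a (hP : IsProfileP₀ P a b c d)
    (hall : ∀ x, x = a ∨ x = b ∨ x = c ∨ x = d)
    (hf : CondorcetExtension f) (hhwm : HalfwayMonotone f) {S₁ : Finset (Fin 15)}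
    {L₁ : LinearOrder A} (hL₁ : Reports4 L₁ d c b a) (hS₁ : ∀ i ∈ S₁, P i = L₁)
    (h₁ : S₁.card = 1) : f (reverseVoters P S₁) ≠ a := by
  have hall' : ∀ x, x = b ∨ x = d ∨ x = c ∨ x = a := fun x => by have := hall x; tauto
  obtain ⟨S₂, L₂, hL₂, hS₂, h₂⟩ := exists_finset_forall_eq_of_reports4 hall' two_pos
    ((by norm_num : 2 ≤ 3).trans hP.card_bdca.ge)
  have hQ₂ := reverseVoters_eq_of_forall_eq hS₁ hS₂
    (LinearOrder.ne_of_lt_of_lt hL₂.second_lt_first hL₁.third_lt_first)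
  exact (hL₂.le_third_iff hall').1 <| hhwm.le_of_isCondorcetWinner hf hQ₂ <|
    hP.isCondorcetWinner_c hall hL₁ hS₁ h₁ hL₂ hQ₂ h₂

theorem apply_reverseVoters_ne_b (hP : IsProfileP₀ P a b c d)
    (hall : ∀ x, x = a ∨ x = b ∨ x = c ∨ x = d) (hab : a ≠ b) (hbc : b ≠ c)
    (hf : CondorcetExtension f) (hhwm : HalfwayMonotone f) {S₁ : Finset (Fin 15)}
    {L₁ : LinearOrder A} (hL₁ : Reports4 L₁ d c b a) (hS₁ : ∀ i ∈ S₁, P i = L₁)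
    (h₁ : S₁.card = 1) : f (reverseVoters P S₁) ≠ b := by
  have hall₂ : ∀ x, x = d ∨ x = c ∨ x = a ∨ x = b := fun x => by have := hall x; tauto
  have hall₃ : ∀ x, x = c ∨ x = a ∨ x = b ∨ x = d := fun x => by have := hall x; tauto
  obtain ⟨S₂, L₂, hL₂, hS₂, h₂⟩ :=
    exists_finset_forall_eq_of_reports4 hall₂ one_pos (one_le_two.trans hP.card_dcab.ge)
  obtain ⟨S₃, L₃, hL₃, hS₃, h₃⟩ := exists_finset_forall_eq_of_reports4 hall₃ two_pos
    ((by norm_num : 2 ≤ 4).trans hP.card_cabd.ge)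
  have hQ₂ := reverseVoters_eq_of_forall_eq hS₁ hS₂
    (LinearOrder.ne_of_lt_of_lt hL₂.fourth_lt_third hL₁.fourth_lt_third)
  have hR₃ := reverseVoters_eq_of_forall_eq hQ₂
    (reverseVoters_eq_of_forall_eq hS₁ hS₃
      (LinearOrder.ne_of_lt_of_lt hL₃.fourth_lt_first hL₁.second_lt_first))
    (LinearOrder.ne_of_lt_of_lt hL₃.fourth_lt_first hL₂.second_lt_first)
  have ha := hhwm.le_of_isCondorcetWinner hf hR₃ <|
    hP.isCondorcetWinner_a hall hL₁ hS₁ h₁ hL₂ hQ₂ h₂ hL₃ hR₃ h₃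
  refine hL₂.ne_fourth_of_le hall₂ (hhwm.le_reverseVoters _ hQ₂) ?_
  rcases (hL₃.le_second_iff hall₃).1 ha with h | h <;> rw [h]
  exacts [hbc.symm, hab]

end IsProfileP₀

end ProfileP₀

theorem odd_profile_chooses_c_or_d_general {A : Type*}
    (a b c d : A)
    (hab : a ≠ b) (hbc : b ≠ c)
    (hall : ∀ x : A, x = a ∨ x = b ∨ x = c ∨ x = d)
    (P₀ : Fin 15 → LinearOrder A)
    (h1 : Nat.card {i // Reports4 (P₀ i) a b c d} = 1)
    (h2 : Nat.card {i // Reports4 (P₀ i) a b d c} = 3)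
    (h3 : Nat.card {i // Reports4 (P₀ i) b d c a} = 3)
    (h4 : Nat.card {i // Reports4 (P₀ i) c a b d} = 4)
    (h5 : Nat.card {i // Reports4 (P₀ i) d c a b} = 2)
    (h6 : Nat.card {i // Reports4 (P₀ i) d c b a} = 2)
    (f : (Fin 15 → LinearOrder A) → A)
    (hf : CondorcetExtension f) (hhwm : HalfwayMonotone f) :
    f P₀ = c ∨ f P₀ = d := by
  have hP : IsProfileP₀ P₀ a b c d := ⟨h1, h2, h3, h4, h5, h6⟩
  have hall' : ∀ x, x = d ∨ x = c ∨ x = b ∨ x = a := fun x => by have := hall x; tauto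
  obtain ⟨S, L, hL, hS, hcard⟩ :=
    exists_finset_forall_eq_of_reports4 hall' one_pos (one_le_two.trans h6.ge)
  have hQ : f (reverseVoters P₀ S) = d ∨ f (reverseVoters P₀ S) = c := by
    have hQa := hP.apply_reverseVoters_ne_a hall hf hhwm hL hS hcard
    have hQb := hP.apply_reverseVoters_ne_b hall hab hbc hf hhwm hL hS hcard
    rcases hall (f (reverseVoters P₀ S)) with h | h | h | h <;> tauto
  rcases hL.eq_or_eq_of_le hall' (hhwm.le_reverseVoters P₀ hS) hQ with h | h
  exacts [Or.inr h, Or.inl h]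

/-- At the 15-voter profile `P₀` of Theorem 3 (odd case), any half-way monotonic
Condorcet extension must choose `c` or `d`. -/
theorem odd_profile_chooses_c_or_d {A : Type*} [Fintype A]
    (a b c d : A)
    (hab : a ≠ b) (hac : a ≠ c) (had : a ≠ d) (hbc : b ≠ c) (hbd : b ≠ d) (hcd : c ≠ d)
    (hall : ∀ x : A, x = a ∨ x = b ∨ x = c ∨ x = d)
    (P₀ : Fin 15 → LinearOrder A)
    (h1 : Nat.card {i // Reports4 (P₀ i) a b c d} = 1)
    (h2 : Nat.card {i // Reports4 (P₀ i) a b d c} = 3)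
    (h3 : Nat.card {i // Reports4 (P₀ i) b d c a} = 3)
    (h4 : Nat.card {i // Reports4 (P₀ i) c a b d} = 4)
    (h5 : Nat.card {i // Reports4 (P₀ i) d c a b} = 2)
    (h6 : Nat.card {i // Reports4 (P₀ i) d c b a} = 2)
    (f : (Fin 15 → LinearOrder A) → A)
    (hf : CondorcetExtension f) (hhwm : HalfwayMonotone f) :
    f P₀ = c ∨ f P₀ = d :=
  odd_profile_chooses_c_or_d_general a b c d hab hbc hall P₀ h1 h2 h3 h4 h5 h6 f hf hhwm
end

section
/- Let A = {a,b,c,d} (4 alternatives) and n = 15 voters, and let P₀ be any profile in which 1 voter reports a≻b≻c≻d, 3 voters report a≻b≻d≻c, 3 voters report b≻d≻c≻a, 4 voters report c≻a≻b≻d, 2 voters report d≻c≻a≻b, and 2 voters report d≻c≻b≻a. If f is a Condorcet extension for 15 voters satisfying half-way monotonicity, then f(P₀) ∉ {c, d}. -/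
section Helpers

variable {A : Type*}

lemma HW_rev_lt (L : LinearOrder A) (x y : A) : (revOrder L).lt x y ↔ L.lt y x := Iff.rfl

lemma HW_lt_trans (L : LinearOrder A) {x y z : A} (h : L.lt x y) (h' : L.lt y z) : L.lt x z := by
  letI := L; exact lt_trans h h'

lemma HW_lt_asymm (L : LinearOrder A) {x y : A} (h : L.lt x y) (h' : L.lt y x) : False := by
  letI := L; exact absurd h' (lt_asymm h)

lemma HW_not_le (L : LinearOrder A) {x y : A} (h : L.lt x y) : ¬ L.le y x := by
  letI := L; exact not_le_of_gt h

/-- All six pairwise facts from a report `w ≻ x ≻ y ≻ z`. -/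
lemma HW_R4 {L : LinearOrder A} {w x y z : A} (h : Reports4 L w x y z) :
    L.lt x w ∧ L.lt y x ∧ L.lt z y ∧ L.lt y w ∧ L.lt z x ∧ L.lt z w :=
  ⟨h.1, h.2.1, h.2.2,
    HW_lt_trans L h.2.1 h.1,
    HW_lt_trans L h.2.2 h.2.1,
    HW_lt_trans L (HW_lt_trans L h.2.2 h.2.1) h.1⟩

lemma HW_disj {n : ℕ} {p q : Fin n → Prop} [DecidablePred p] [DecidablePred q]
    (h : ∀ i, p i → q i → False) :
    Disjoint (Finset.univ.filter p) (Finset.univ.filter q) := by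
  rw [Finset.disjoint_left]
  intro i hip hiq
  exact h i (Finset.mem_filter.mp hip).2 (Finset.mem_filter.mp hiq).2

lemma HW_card3 {α : Type*} [DecidableEq α] {s t u : Finset α}
    (hst : Disjoint s t) (hsu : Disjoint s u) (htu : Disjoint t u) :
    (s ∪ t ∪ u).card = s.card + t.card + u.card := by
  rw [Finset.card_union_of_disjoint (Finset.disjoint_union_left.mpr ⟨hsu, htu⟩),
    Finset.card_union_of_disjoint hst]

lemma HW_card4 {α : Type*} [DecidableEq α] {s t u v : Finset α}
    (hst : Disjoint s t) (hsu : Disjoint s u) (htu : Disjoint t u)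
    (hsv : Disjoint s v) (htv : Disjoint t v) (huv : Disjoint u v) :
    (s ∪ t ∪ u ∪ v).card = s.card + t.card + u.card + v.card := by
  rw [Finset.card_union_of_disjoint
      (Finset.disjoint_union_left.mpr ⟨Finset.disjoint_union_left.mpr ⟨hsv, htv⟩, huv⟩),
    HW_card3 hst hsu htu]

lemma HW_count_lt {Q : Fin 15 → LinearOrder A} {x y : A}
    (S : Finset (Fin 15)) (hcard : 8 ≤ S.card)
    (hS : ∀ i ∈ S, (Q i).lt y x) :
    Nat.card {i // (Q i).lt x y} < Nat.card {i // (Q i).lt y x} := by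
  classical
  have e1 : Nat.card {i // (Q i).lt x y} = (Finset.univ.filter fun i => (Q i).lt x y).card := by
    simp [Nat.card_eq_fintype_card, Fintype.card_subtype]
  have e2 : Nat.card {i // (Q i).lt y x} = (Finset.univ.filter fun i => (Q i).lt y x).card := by
    simp [Nat.card_eq_fintype_card, Fintype.card_subtype]
  have hsub : S ⊆ Finset.univ.filter fun i => (Q i).lt y x :=
    fun i hi => Finset.mem_filter.2 ⟨Finset.mem_univ _, hS i hi⟩
  have h2 := le_trans hcard (Finset.card_le_card hsub)
  have hd : (Finset.univ.filter fun i => (Q i).lt x y) ⊆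
      Finset.univ \ (Finset.univ.filter fun i => (Q i).lt y x) := by
    intro i hi
    rw [Finset.mem_sdiff]
    refine ⟨Finset.mem_univ _, fun h' => ?_⟩
    exact HW_lt_asymm (Q i) (Finset.mem_filter.mp hi).2 (Finset.mem_filter.mp h').2
  have h3 := Finset.card_le_card hd
  rw [Finset.card_sdiff_of_subset (Finset.subset_univ _)] at h3
  have h4 : (Finset.univ : Finset (Fin 15)).card = 15 := by simp
  omega

end Helpers

/-- At the 15-voter profile `P₀` of Theorem 3 (odd case), any half-way monotonic
Condorcet extension must choose neither `c` nor `d`. -/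
theorem odd_profile_not_c_or_d {A : Type*} [Fintype A]
    (a b c d : A)
    (hab : a ≠ b) (hac : a ≠ c) (had : a ≠ d) (hbc : b ≠ c) (hbd : b ≠ d) (hcd : c ≠ d)
    (hall : ∀ x : A, x = a ∨ x = b ∨ x = c ∨ x = d)
    (P₀ : Fin 15 → LinearOrder A)
    (h1 : Nat.card {i // Reports4 (P₀ i) a b c d} = 1)
    (h2 : Nat.card {i // Reports4 (P₀ i) a b d c} = 3)
    (h3 : Nat.card {i // Reports4 (P₀ i) b d c a} = 3)
    (h4 : Nat.card {i // Reports4 (P₀ i) c a b d} = 4)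
    (h5 : Nat.card {i // Reports4 (P₀ i) d c a b} = 2)
    (h6 : Nat.card {i // Reports4 (P₀ i) d c b a} = 2)
    (f : (Fin 15 → LinearOrder A) → A)
    (hf : CondorcetExtension f) (hhwm : HalfwayMonotone f) :
    ¬ (f P₀ = c ∨ f P₀ = d) := by
  classical
  have hcard : ∀ (w x y z : A), Nat.card {i // Reports4 (P₀ i) w x y z}
      = (Finset.univ.filter fun i => Reports4 (P₀ i) w x y z).card := by
    intro w x y z
    simp [Nat.card_eq_fintype_card, Fintype.card_subtype]
  set TA := Finset.univ.filter (fun i => Reports4 (P₀ i) a b c d) with hTA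
  set TB := Finset.univ.filter (fun i => Reports4 (P₀ i) a b d c) with hTB
  set TC := Finset.univ.filter (fun i => Reports4 (P₀ i) b d c a) with hTC
  set TD := Finset.univ.filter (fun i => Reports4 (P₀ i) c a b d) with hTD
  set TE := Finset.univ.filter (fun i => Reports4 (P₀ i) d c a b) with hTE
  set TF := Finset.univ.filter (fun i => Reports4 (P₀ i) d c b a) with hTF
  have cA : TA.card = 1 := by rw [hTA, ← hcard]; exact h1
  have cB : TB.card = 3 := by rw [hTB, ← hcard]; exact h2
  have cC : TC.card = 3 := by rw [hTC, ← hcard]; exact h3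
  have cD : TD.card = 4 := by rw [hTD, ← hcard]; exact h4
  have cE : TE.card = 2 := by rw [hTE, ← hcard]; exact h5
  have cF : TF.card = 2 := by rw [hTF, ← hcard]; exact h6
  have memA : ∀ i ∈ TA, Reports4 (P₀ i) a b c d := by
    intro i hi; rw [hTA] at hi; exact (Finset.mem_filter.mp hi).2
  have memB : ∀ i ∈ TB, Reports4 (P₀ i) a b d c := by
    intro i hi; rw [hTB] at hi; exact (Finset.mem_filter.mp hi).2
  have memC : ∀ i ∈ TC, Reports4 (P₀ i) b d c a := by
    intro i hi; rw [hTC] at hi; exact (Finset.mem_filter.mp hi).2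
  have memD : ∀ i ∈ TD, Reports4 (P₀ i) c a b d := by
    intro i hi; rw [hTD] at hi; exact (Finset.mem_filter.mp hi).2
  have memE : ∀ i ∈ TE, Reports4 (P₀ i) d c a b := by
    intro i hi; rw [hTE] at hi; exact (Finset.mem_filter.mp hi).2
  have memF : ∀ i ∈ TF, Reports4 (P₀ i) d c b a := by
    intro i hi; rw [hTF] at hi; exact (Finset.mem_filter.mp hi).2
  have dAB : Disjoint TA TB := by
    rw [hTA, hTB]
    exact HW_disj fun i hp hq => HW_lt_asymm _ (HW_R4 hp).2.2.1 (HW_R4 hq).2.2.1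
  have dAC : Disjoint TA TC := by
    rw [hTA, hTC]
    exact HW_disj fun i hp hq => HW_lt_asymm _ (HW_R4 hp).1 (HW_R4 hq).2.2.2.2.2
  have dAD : Disjoint TA TD := by
    rw [hTA, hTD]
    exact HW_disj fun i hp hq => HW_lt_asymm _ (HW_R4 hp).2.2.2.1 (HW_R4 hq).1
  have dAE : Disjoint TA TE := by
    rw [hTA, hTE]
    exact HW_disj fun i hp hq => HW_lt_asymm _ (HW_R4 hp).2.2.2.2.2 (HW_R4 hq).2.2.2.1
  have dAF : Disjoint TA TF := by
    rw [hTA, hTF]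
    exact HW_disj fun i hp hq => HW_lt_asymm _ (HW_R4 hp).1 (HW_R4 hq).2.2.1
  have dBC : Disjoint TB TC := by
    rw [hTB, hTC]
    exact HW_disj fun i hp hq => HW_lt_asymm _ (HW_R4 hp).1 (HW_R4 hq).2.2.2.2.2
  have dBD : Disjoint TB TD := by
    rw [hTB, hTD]
    exact HW_disj fun i hp hq => HW_lt_asymm _ (HW_R4 hp).2.2.2.2.2 (HW_R4 hq).1
  have dBE : Disjoint TB TE := by
    rw [hTB, hTE]
    exact HW_disj fun i hp hq => HW_lt_asymm _ (HW_R4 hp).2.2.2.1 (HW_R4 hq).2.2.2.1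
  have dBF : Disjoint TB TF := by
    rw [hTB, hTF]
    exact HW_disj fun i hp hq => HW_lt_asymm _ (HW_R4 hp).1 (HW_R4 hq).2.2.1
  have dCD : Disjoint TC TD := by
    rw [hTC, hTD]
    exact HW_disj fun i hp hq => HW_lt_asymm _ (HW_R4 hp).2.2.2.2.2 (HW_R4 hq).2.1
  have dCE : Disjoint TC TE := by
    rw [hTC, hTE]
    exact HW_disj fun i hp hq => HW_lt_asymm _ (HW_R4 hp).2.2.2.2.2 (HW_R4 hq).2.2.1
  have dCF : Disjoint TC TF := by
    rw [hTC, hTF]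
    exact HW_disj fun i hp hq => HW_lt_asymm _ (HW_R4 hp).1 (HW_R4 hq).2.2.2.1
  have dDF : Disjoint TD TF := by
    rw [hTD, hTF]
    exact HW_disj fun i hp hq => HW_lt_asymm _ (HW_R4 hp).2.1 (HW_R4 hq).2.2.1
  have dEF : Disjoint TE TF := by
    rw [hTE, hTF]
    exact HW_disj fun i hp hq => HW_lt_asymm _ (HW_R4 hp).2.2.1 (HW_R4 hq).2.2.1
  obtain ⟨i₀, hTAe⟩ := Finset.card_eq_one.mp cA
  obtain ⟨i₁, i₂, i₃, h12, h13, h23, hTBe⟩ := Finset.card_eq_three.mp cB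
  obtain ⟨j₁, hj₁, j₂, hj₂, hjne⟩ := Finset.one_lt_card.mp
    (show 1 < TD.card by rw [cD]; norm_num)
  have hi₀ : i₀ ∈ TA := by rw [hTAe]; exact Finset.mem_singleton_self i₀
  have hi₁ : i₁ ∈ TB := by rw [hTBe]; simp
  have hi₂ : i₂ ∈ TB := by rw [hTBe]; simp
  have hi₃ : i₃ ∈ TB := by rw [hTBe]; simp
  have memTB_eq : ∀ i ∈ TB, i = i₁ ∨ i = i₂ ∨ i = i₃ := by
    intro i hi; rw [hTBe] at hi; simpa using hi
  have memTA_eq : ∀ i ∈ TA, i = i₀ := by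
    intro i hi; rw [hTAe] at hi; simpa using hi
  have neBA : ∀ i ∈ TB, i ≠ i₀ := fun i hi e =>
    Finset.disjoint_left.mp dAB hi₀ (e ▸ hi)
  have neDA : ∀ i ∈ TD, i ≠ i₀ := fun i hi e =>
    Finset.disjoint_left.mp dAD hi₀ (e ▸ hi)
  have ne10 : i₁ ≠ i₀ := neBA i₁ hi₁
  have ne20 : i₂ ≠ i₀ := neBA i₂ hi₂
  have ne30 : i₃ ≠ i₀ := neBA i₃ hi₃
  have nej10 : j₁ ≠ i₀ := neDA j₁ hj₁
  have nej20 : j₂ ≠ i₀ := neDA j₂ hj₂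
  -- the reversal profiles
  have e1 := hhwm P₀ i₀
  set Q1 := Function.update P₀ i₀ (revOrder (P₀ i₀)) with hQ1def
  have e2 := hhwm Q1 i₁
  set Q2 := Function.update Q1 i₁ (revOrder (Q1 i₁)) with hQ2def
  have e3 := hhwm Q2 i₂
  set Q3 := Function.update Q2 i₂ (revOrder (Q2 i₂)) with hQ3def
  have e4 := hhwm Q3 i₃
  set Q4 := Function.update Q3 i₃ (revOrder (Q3 i₃)) with hQ4def
  have e5 := hhwm Q1 j₁
  set R1 := Function.update Q1 j₁ (revOrder (Q1 j₁)) with hR1def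
  have e6 := hhwm R1 j₂
  set R2 := Function.update R1 j₂ (revOrder (R1 j₂)) with hR2def
  -- evaluation lemmas
  have EQ1 : ∀ i, i ≠ i₀ → Q1 i = P₀ i := fun i h => by
    rw [hQ1def]; exact Function.update_of_ne h _ _
  have EQ1s : Q1 i₀ = revOrder (P₀ i₀) := by
    rw [hQ1def]; exact Function.update_self _ _ _
  have EQ2 : ∀ i, i ≠ i₀ → i ≠ i₁ → Q2 i = P₀ i := fun i h h' => by
    rw [hQ2def, Function.update_of_ne h', EQ1 i h]
  have hQ1i₁ : Q1 i₁ = P₀ i₁ := EQ1 i₁ ne10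
  have EQ2s1 : Q2 i₁ = revOrder (P₀ i₁) := by
    rw [hQ2def, Function.update_self, hQ1i₁]
  have EQ3 : ∀ i, i ≠ i₀ → i ≠ i₁ → i ≠ i₂ → Q3 i = P₀ i := fun i h h' h'' => by
    rw [hQ3def, Function.update_of_ne h'', EQ2 i h h']
  have hQ2i₂ : Q2 i₂ = P₀ i₂ := EQ2 i₂ ne20 h12.symm
  have EQ3s2 : Q3 i₂ = revOrder (P₀ i₂) := by
    rw [hQ3def, Function.update_self, hQ2i₂]
  have EQ4 : ∀ i, i ≠ i₀ → i ≠ i₁ → i ≠ i₂ → i ≠ i₃ → Q4 i = P₀ i := fun i h h' h'' h''' => by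
    rw [hQ4def, Function.update_of_ne h''', EQ3 i h h' h'']
  have hQ3i₃ : Q3 i₃ = P₀ i₃ := EQ3 i₃ ne30 h13.symm h23.symm
  have EQ4s0 : Q4 i₀ = revOrder (P₀ i₀) := by
    rw [hQ4def, Function.update_of_ne ne30.symm, hQ3def, Function.update_of_ne ne20.symm,
      hQ2def, Function.update_of_ne ne10.symm, EQ1s]
  have EQ4TB : ∀ i ∈ TB, Q4 i = revOrder (P₀ i) := by
    intro i hi
    rcases memTB_eq i hi with rfl | rfl | rfl
    · rw [hQ4def, Function.update_of_ne h13, hQ3def, Function.update_of_ne h12, EQ2s1]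
    · rw [hQ4def, Function.update_of_ne h23, EQ3s2]
    · rw [hQ4def, Function.update_self, hQ3i₃]
  have ER1 : ∀ i, i ≠ i₀ → i ≠ j₁ → R1 i = P₀ i := fun i h h' => by
    rw [hR1def, Function.update_of_ne h', EQ1 i h]
  have hQ1j₁ : Q1 j₁ = P₀ j₁ := EQ1 j₁ nej10
  have ER2 : ∀ i, i ≠ i₀ → i ≠ j₁ → i ≠ j₂ → R2 i = P₀ i := fun i h h' h'' => by
    rw [hR2def, Function.update_of_ne h'', ER1 i h h']
  have hR1j₂ : R1 j₂ = P₀ j₂ := ER1 j₂ nej20 hjne.symm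
  have ER2s0 : R2 i₀ = revOrder (P₀ i₀) := by
    rw [hR2def, Function.update_of_ne nej20.symm, hR1def, Function.update_of_ne nej10.symm, EQ1s]
  have ER2j₁ : R2 j₁ = revOrder (P₀ j₁) := by
    rw [hR2def, Function.update_of_ne hjne, hR1def, Function.update_self, hQ1j₁]
  have ER2j₂ : R2 j₂ = revOrder (P₀ j₂) := by
    rw [hR2def, Function.update_self, hR1j₂]
  -- rewrite the true orders in the half-way monotonicity facts
  rw [hQ1i₁] at e2
  rw [hQ2i₂] at e3
  rw [hQ3i₃] at e4
  rw [hQ1j₁] at e5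
  rw [hR1j₂] at e6
  -- Condorcet winner fact for Q4 : d wins there
  have hfQ4 : f Q4 = d := by
    apply hf
    intro e he
    rcases hall e with rfl | rfl | rfl | rfl
    · refine HW_count_lt (TA ∪ TC ∪ TE ∪ TF) ?_ ?_
      · rw [HW_card4 dAC dAE dCE dAF dCF dEF, cA, cC, cE, cF]
      · intro i hi
        simp only [Finset.mem_union] at hi
        rcases hi with ((hi | hi) | hi) | hi
        · rw [memTA_eq i hi, EQ4s0, HW_rev_lt]
          exact (HW_R4 (memA i₀ hi₀)).2.2.2.2.2
        · rw [EQ4 i (fun h => Finset.disjoint_left.mp dAC hi₀ (h ▸ hi))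
            (fun h => Finset.disjoint_left.mp dBC hi₁ (h ▸ hi))
            (fun h => Finset.disjoint_left.mp dBC hi₂ (h ▸ hi))
            (fun h => Finset.disjoint_left.mp dBC hi₃ (h ▸ hi))]
          exact (HW_R4 (memC i hi)).2.2.2.2.1
        · rw [EQ4 i (fun h => Finset.disjoint_left.mp dAE hi₀ (h ▸ hi))
            (fun h => Finset.disjoint_left.mp dBE hi₁ (h ▸ hi))
            (fun h => Finset.disjoint_left.mp dBE hi₂ (h ▸ hi))
            (fun h => Finset.disjoint_left.mp dBE hi₃ (h ▸ hi))]
          exact (HW_R4 (memE i hi)).2.2.2.1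
        · rw [EQ4 i (fun h => Finset.disjoint_left.mp dAF hi₀ (h ▸ hi))
            (fun h => Finset.disjoint_left.mp dBF hi₁ (h ▸ hi))
            (fun h => Finset.disjoint_left.mp dBF hi₂ (h ▸ hi))
            (fun h => Finset.disjoint_left.mp dBF hi₃ (h ▸ hi))]
          exact (HW_R4 (memF i hi)).2.2.2.2.2
    · refine HW_count_lt (TA ∪ TB ∪ TE ∪ TF) ?_ ?_
      · rw [HW_card4 dAB dAE dBE dAF dBF dEF, cA, cB, cE, cF]
      · intro i hi
        simp only [Finset.mem_union] at hi
        rcases hi with ((hi | hi) | hi) | hi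
        · rw [memTA_eq i hi, EQ4s0, HW_rev_lt]
          exact (HW_R4 (memA i₀ hi₀)).2.2.2.2.1
        · rw [EQ4TB i hi, HW_rev_lt]
          exact (HW_R4 (memB i hi)).2.1
        · rw [EQ4 i (fun h => Finset.disjoint_left.mp dAE hi₀ (h ▸ hi))
            (fun h => Finset.disjoint_left.mp dBE hi₁ (h ▸ hi))
            (fun h => Finset.disjoint_left.mp dBE hi₂ (h ▸ hi))
            (fun h => Finset.disjoint_left.mp dBE hi₃ (h ▸ hi))]
          exact (HW_R4 (memE i hi)).2.2.2.2.2
        · rw [EQ4 i (fun h => Finset.disjoint_left.mp dAF hi₀ (h ▸ hi))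
            (fun h => Finset.disjoint_left.mp dBF hi₁ (h ▸ hi))
            (fun h => Finset.disjoint_left.mp dBF hi₂ (h ▸ hi))
            (fun h => Finset.disjoint_left.mp dBF hi₃ (h ▸ hi))]
          exact (HW_R4 (memF i hi)).2.2.2.1
    · refine HW_count_lt (TA ∪ TC ∪ TE ∪ TF) ?_ ?_
      · rw [HW_card4 dAC dAE dCE dAF dCF dEF, cA, cC, cE, cF]
      · intro i hi
        simp only [Finset.mem_union] at hi
        rcases hi with ((hi | hi) | hi) | hi
        · rw [memTA_eq i hi, EQ4s0, HW_rev_lt]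
          exact (HW_R4 (memA i₀ hi₀)).2.2.1
        · rw [EQ4 i (fun h => Finset.disjoint_left.mp dAC hi₀ (h ▸ hi))
            (fun h => Finset.disjoint_left.mp dBC hi₁ (h ▸ hi))
            (fun h => Finset.disjoint_left.mp dBC hi₂ (h ▸ hi))
            (fun h => Finset.disjoint_left.mp dBC hi₃ (h ▸ hi))]
          exact (HW_R4 (memC i hi)).2.1
        · rw [EQ4 i (fun h => Finset.disjoint_left.mp dAE hi₀ (h ▸ hi))
            (fun h => Finset.disjoint_left.mp dBE hi₁ (h ▸ hi))
            (fun h => Finset.disjoint_left.mp dBE hi₂ (h ▸ hi))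
            (fun h => Finset.disjoint_left.mp dBE hi₃ (h ▸ hi))]
          exact (HW_R4 (memE i hi)).1
        · rw [EQ4 i (fun h => Finset.disjoint_left.mp dAF hi₀ (h ▸ hi))
            (fun h => Finset.disjoint_left.mp dBF hi₁ (h ▸ hi))
            (fun h => Finset.disjoint_left.mp dBF hi₂ (h ▸ hi))
            (fun h => Finset.disjoint_left.mp dBF hi₃ (h ▸ hi))]
          exact (HW_R4 (memF i hi)).1
    · exact absurd rfl he
  -- Condorcet winner fact for R2 : b wins there
  have hjj : ({j₁, j₂} : Finset (Fin 15)) ⊆ TD := by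
    intro i hi
    rcases Finset.mem_insert.mp hi with rfl | hi
    · exact hj₁
    · rw [Finset.mem_singleton.mp hi]; exact hj₂
  have cjj : ({j₁, j₂} : Finset (Fin 15)).card = 2 := Finset.card_pair hjne
  have memjj : ∀ i ∈ ({j₁, j₂} : Finset (Fin 15)), R2 i = revOrder (P₀ i) ∧ i ∈ TD := by
    intro i hi
    rcases Finset.mem_insert.mp hi with rfl | hi
    · exact ⟨ER2j₁, hj₁⟩
    · rw [Finset.mem_singleton.mp hi]; exact ⟨ER2j₂, hj₂⟩
  have hfR2 : f R2 = b := by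
    apply hf
    intro e he
    rcases hall e with rfl | rfl | rfl | rfl
    · refine HW_count_lt (TA ∪ TC ∪ TF ∪ {j₁, j₂}) ?_ ?_
      · rw [HW_card4 dAC dAF dCF (dAD.mono_right hjj) (dCD.mono_right hjj)
          (dDF.symm.mono_right hjj), cA, cC, cF, cjj]
      · intro i hi
        simp only [Finset.mem_union] at hi
        rcases hi with ((hi | hi) | hi) | hi
        · rw [memTA_eq i hi, ER2s0, HW_rev_lt]
          exact (HW_R4 (memA i₀ hi₀)).1
        · rw [ER2 i (fun h => Finset.disjoint_left.mp dAC hi₀ (h ▸ hi))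
            (fun h => Finset.disjoint_left.mp dCD (h ▸ hi) hj₁)
            (fun h => Finset.disjoint_left.mp dCD (h ▸ hi) hj₂)]
          exact (HW_R4 (memC i hi)).2.2.2.2.2
        · rw [ER2 i (fun h => Finset.disjoint_left.mp dAF hi₀ (h ▸ hi))
            (fun h => Finset.disjoint_left.mp dDF hj₁ (h ▸ hi))
            (fun h => Finset.disjoint_left.mp dDF hj₂ (h ▸ hi))]
          exact (HW_R4 (memF i hi)).2.2.1
        · obtain ⟨hval, hiD⟩ := memjj i hi
          rw [hval, HW_rev_lt]
          exact (HW_R4 (memD i hiD)).2.1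
    · exact absurd rfl he
    · refine HW_count_lt (TB ∪ TC ∪ {j₁, j₂}) ?_ ?_
      · rw [HW_card3 dBC (dBD.mono_right hjj) (dCD.mono_right hjj), cB, cC, cjj]
      · intro i hi
        simp only [Finset.mem_union] at hi
        rcases hi with (hi | hi) | hi
        · rw [ER2 i (neBA i hi)
            (fun h => Finset.disjoint_left.mp dBD (h ▸ hi) hj₁)
            (fun h => Finset.disjoint_left.mp dBD (h ▸ hi) hj₂)]
          exact (HW_R4 (memB i hi)).2.2.2.2.1
        · rw [ER2 i (fun h => Finset.disjoint_left.mp dAC hi₀ (h ▸ hi))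
            (fun h => Finset.disjoint_left.mp dCD (h ▸ hi) hj₁)
            (fun h => Finset.disjoint_left.mp dCD (h ▸ hi) hj₂)]
          exact (HW_R4 (memC i hi)).2.2.2.1
        · obtain ⟨hval, hiD⟩ := memjj i hi
          rw [hval, HW_rev_lt]
          exact (HW_R4 (memD i hiD)).2.2.2.1
    · refine HW_count_lt (TB ∪ TC ∪ (TD \ {j₁, j₂})) ?_ ?_
      · rw [HW_card3 dBC (dBD.mono_right (Finset.sdiff_subset))
          (dCD.mono_right (Finset.sdiff_subset)), cB, cC,
          Finset.card_sdiff_of_subset hjj, cD, cjj]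
      · intro i hi
        simp only [Finset.mem_union] at hi
        rcases hi with (hi | hi) | hi
        · rw [ER2 i (neBA i hi)
            (fun h => Finset.disjoint_left.mp dBD (h ▸ hi) hj₁)
            (fun h => Finset.disjoint_left.mp dBD (h ▸ hi) hj₂)]
          exact (HW_R4 (memB i hi)).2.1
        · rw [ER2 i (fun h => Finset.disjoint_left.mp dAC hi₀ (h ▸ hi))
            (fun h => Finset.disjoint_left.mp dCD (h ▸ hi) hj₁)
            (fun h => Finset.disjoint_left.mp dCD (h ▸ hi) hj₂)]
          exact (HW_R4 (memC i hi)).1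
        · obtain ⟨hiD, hnot⟩ := Finset.mem_sdiff.mp hi
          rw [ER2 i (neDA i hiD)
            (fun h => hnot (by rw [h]; exact Finset.mem_insert_self _ _))
            (fun h => hnot (by rw [h]; simp))]
          exact (HW_R4 (memD i hiD)).2.2.1
  -- the main argument
  intro hPcd
  have FA := HW_R4 (memA i₀ hi₀)
  have hfQ1 : f Q1 = c ∨ f Q1 = d := by
    rcases hall (f Q1) with h | h | h | h
    · exfalso; rw [h] at e1
      rcases hPcd with h0 | h0 <;> rw [h0] at e1
      · exact HW_not_le _ FA.2.2.2.1 e1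
      · exact HW_not_le _ FA.2.2.2.2.2 e1
    · exfalso; rw [h] at e1
      rcases hPcd with h0 | h0 <;> rw [h0] at e1
      · exact HW_not_le _ FA.2.1 e1
      · exact HW_not_le _ FA.2.2.2.2.1 e1
    · exact Or.inl h
    · exact Or.inr h
  rcases hfQ1 with hQ1c | hQ1d
  · -- f Q1 = c : reverse the three abdc voters, reaching CW d
    have FB1 := HW_R4 (memB i₁ hi₁)
    have FB2 := HW_R4 (memB i₂ hi₂)
    have FB3 := HW_R4 (memB i₃ hi₃)
    have hQ2c : f Q2 = c := by
      rcases hall (f Q2) with h | h | h | h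
      · exfalso; rw [h, hQ1c] at e2; exact HW_not_le _ FB1.2.2.2.2.2 e2
      · exfalso; rw [h, hQ1c] at e2; exact HW_not_le _ FB1.2.2.2.2.1 e2
      · exact h
      · exfalso; rw [h, hQ1c] at e2; exact HW_not_le _ FB1.2.2.1 e2
    have hQ3c : f Q3 = c := by
      rcases hall (f Q3) with h | h | h | h
      · exfalso; rw [h, hQ2c] at e3; exact HW_not_le _ FB2.2.2.2.2.2 e3
      · exfalso; rw [h, hQ2c] at e3; exact HW_not_le _ FB2.2.2.2.2.1 e3
      · exact h
      · exfalso; rw [h, hQ2c] at e3; exact HW_not_le _ FB2.2.2.1 e3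
    rw [hfQ4, hQ3c] at e4
    exact HW_not_le _ FB3.2.2.1 e4
  · -- f Q1 = d : reverse two cabd voters, reaching CW b
    have FD1 := HW_R4 (memD j₁ hj₁)
    have FD2 := HW_R4 (memD j₂ hj₂)
    have hR1d : f R1 = d := by
      rcases hall (f R1) with h | h | h | h
      · exfalso; rw [h, hQ1d] at e5; exact HW_not_le _ FD1.2.2.2.2.1 e5
      · exfalso; rw [h, hQ1d] at e5; exact HW_not_le _ FD1.2.2.1 e5
      · exfalso; rw [h, hQ1d] at e5; exact HW_not_le _ FD1.2.2.2.2.2 e5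
      · exact h
    rw [hfR2, hR1d] at e6
    exact HW_not_le _ FD2.2.2.1 e6
end

section
/- Let A = {a,b,c,d} (4 alternatives) and n = 24 voters, and let P₀ be any profile in which 2 voters report a≻b≻c≻d, 4 voters report a≻b≻d≻c, 6 voters report b≻d≻c≻a, 6 voters report c≻a≻b≻d, 4 voters report d≻c≻a≻b, and 2 voters report d≻c≻b≻a. If f is a Condorcet extension for 24 voters satisfying half-way monotonicity, then f(P₀) ∉ {c, d}. -/
section helpers
variable {A : Type*} (L : LinearOrder A)

lemma hw_rev_lt {x y : A} : (revOrder L).lt x y ↔ L.lt y x := Iff.rfl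

lemma hw_trans {x y z : A} (h1 : L.lt x y) (h2 : L.lt y z) : L.lt x z := by
  letI := L; exact lt_trans h1 h2

lemma hw_le_lt {x y : A} (h1 : L.le x y) (h2 : L.lt y x) : False := by
  letI := L; exact absurd h1 (not_le_of_gt h2)

lemma hw_asymm {x y : A} (h1 : L.lt x y) (h2 : L.lt y x) : False := by
  letI := L; exact lt_asymm h1 h2

lemma hw_r4 {w x y z : A} (h : Reports4 L w x y z) :
    L.lt x w ∧ L.lt y x ∧ L.lt z y ∧ L.lt y w ∧ L.lt z x ∧ L.lt z w :=
  ⟨h.1, h.2.1, h.2.2, hw_trans L h.2.1 h.1, hw_trans L h.2.2 h.2.1,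
   hw_trans L (hw_trans L h.2.2 h.2.1) h.1⟩
end helpers

lemma hw_card_subtype {n : ℕ} (p : Fin n → Prop) [DecidablePred p] :
    Nat.card {i // p i} = (Finset.univ.filter p).card := by
  rw [Nat.card_eq_fintype_card]
  exact Fintype.card_subtype p

lemma hw_pair {A : Type*} (P : Fin 24 → LinearOrder A) (x y : A) (W : Finset (Fin 24))
    (hW : ∀ i ∈ W, (P i).lt x y) (hcard : 13 ≤ W.card) :
    Nat.card {i // (P i).lt y x} < Nat.card {i // (P i).lt x y} := by
  classical
  rw [hw_card_subtype, hw_card_subtype]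
  have hsub : W ⊆ Finset.univ.filter (fun i => (P i).lt x y) :=
    fun i hi => Finset.mem_filter.mpr ⟨Finset.mem_univ i, hW i hi⟩
  have h1 : 13 ≤ (Finset.univ.filter (fun i => (P i).lt x y)).card :=
    le_trans hcard (Finset.card_le_card hsub)
  have hdisj : Disjoint (Finset.univ.filter (fun i => (P i).lt y x))
      (Finset.univ.filter (fun i => (P i).lt x y)) := by
    rw [Finset.disjoint_left]
    intro i hi1 hi2
    exact absurd (Finset.mem_filter.mp hi1).2
      (fun h => hw_asymm (P i) (Finset.mem_filter.mp hi2).2 h)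
  have h2 := Finset.card_union_of_disjoint hdisj
  have h3 : (Finset.univ.filter (fun i => (P i).lt y x)
      ∪ Finset.univ.filter (fun i => (P i).lt x y)).card ≤ 24 := by
    refine le_trans (Finset.card_le_card (Finset.subset_univ _)) ?_
    simp
  omega

lemma hwm_downset {A : Type*} {n : ℕ}
    (f : (Fin n → LinearOrder A) → A) (hhwm : HalfwayMonotone f)
    (S : Set A) (P : Fin n → LinearOrder A) (F : Finset (Fin n))
    (hF : ∀ i ∈ F, ∀ x ∈ S, ∀ y, (P i).le y x → y ∈ S) (hfP : f P ∈ S) :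
    f (fun i => if i ∈ F then revOrder (P i) else P i) ∈ S := by
  classical
  induction F using Finset.induction_on with
  | empty => simpa using hfP
  | @insert j F hj ih =>
    set Q : Fin n → LinearOrder A := fun i => if i ∈ F then revOrder (P i) else P i with hQ
    have hQS : f Q ∈ S := ih (fun i hi => hF i (Finset.mem_insert_of_mem hi))
    have hQj : Q j = P j := by simp [hQ, hj]
    have heq : (fun i => if i ∈ insert j F then revOrder (P i) else P i)
        = Function.update Q j (revOrder (P j)) := by
      funext i
      by_cases h : i = j
      · subst h
        simp [Function.update_self]
      · simp [Function.update_of_ne h, hQ, Finset.mem_insert, h]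
    rw [heq]
    have hmon := hhwm Q j
    rw [hQj] at hmon
    exact hF j (Finset.mem_insert_self j F) (f Q) hQS _ hmon

/-- At the 24-voter profile `P₀` of Theorem 4 (even case), any half-way monotonic
Condorcet extension must choose neither `c` nor `d`. -/
theorem even_profile_not_c_or_d {A : Type*} [Fintype A]
    (a b c d : A)
    (hab : a ≠ b) (hac : a ≠ c) (had : a ≠ d) (hbc : b ≠ c) (hbd : b ≠ d) (hcd : c ≠ d)
    (hall : ∀ x : A, x = a ∨ x = b ∨ x = c ∨ x = d)
    (P₀ : Fin 24 → LinearOrder A)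
    (h1 : Nat.card {i // Reports4 (P₀ i) a b c d} = 2)
    (h2 : Nat.card {i // Reports4 (P₀ i) a b d c} = 4)
    (h3 : Nat.card {i // Reports4 (P₀ i) b d c a} = 6)
    (h4 : Nat.card {i // Reports4 (P₀ i) c a b d} = 6)
    (h5 : Nat.card {i // Reports4 (P₀ i) d c a b} = 4)
    (h6 : Nat.card {i // Reports4 (P₀ i) d c b a} = 2)
    (f : (Fin 24 → LinearOrder A) → A)
    (hf : CondorcetExtension f) (hhwm : HalfwayMonotone f) :
    ¬ (f P₀ = c ∨ f P₀ = d) := by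
  classical
  intro hor
  set s1 := Finset.univ.filter (fun i => Reports4 (P₀ i) a b c d) with hs1
  set s2 := Finset.univ.filter (fun i => Reports4 (P₀ i) a b d c) with hs2
  set s3 := Finset.univ.filter (fun i => Reports4 (P₀ i) b d c a) with hs3
  set s4 := Finset.univ.filter (fun i => Reports4 (P₀ i) c a b d) with hs4
  set s5 := Finset.univ.filter (fun i => Reports4 (P₀ i) d c a b) with hs5
  set s6 := Finset.univ.filter (fun i => Reports4 (P₀ i) d c b a) with hs6
  have c1 : s1.card = 2 := by rw [hs1, ← hw_card_subtype]; exact h1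
  have c2 : s2.card = 4 := by rw [hs2, ← hw_card_subtype]; exact h2
  have c3 : s3.card = 6 := by rw [hs3, ← hw_card_subtype]; exact h3
  have c4 : s4.card = 6 := by rw [hs4, ← hw_card_subtype]; exact h4
  have c5 : s5.card = 4 := by rw [hs5, ← hw_card_subtype]; exact h5
  have c6 : s6.card = 2 := by rw [hs6, ← hw_card_subtype]; exact h6
  -- the six lt-fact bundles
  have L1 : ∀ i ∈ s1, (P₀ i).lt b a ∧ (P₀ i).lt c b ∧ (P₀ i).lt d c ∧ (P₀ i).lt c a ∧
      (P₀ i).lt d b ∧ (P₀ i).lt d a :=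
    fun i hi => hw_r4 (P₀ i) (Finset.mem_filter.mp hi).2
  have L2 : ∀ i ∈ s2, (P₀ i).lt b a ∧ (P₀ i).lt d b ∧ (P₀ i).lt c d ∧ (P₀ i).lt d a ∧
      (P₀ i).lt c b ∧ (P₀ i).lt c a :=
    fun i hi => hw_r4 (P₀ i) (Finset.mem_filter.mp hi).2
  have L3 : ∀ i ∈ s3, (P₀ i).lt d b ∧ (P₀ i).lt c d ∧ (P₀ i).lt a c ∧ (P₀ i).lt c b ∧
      (P₀ i).lt a d ∧ (P₀ i).lt a b :=
    fun i hi => hw_r4 (P₀ i) (Finset.mem_filter.mp hi).2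
  have L4 : ∀ i ∈ s4, (P₀ i).lt a c ∧ (P₀ i).lt b a ∧ (P₀ i).lt d b ∧ (P₀ i).lt b c ∧
      (P₀ i).lt d a ∧ (P₀ i).lt d c :=
    fun i hi => hw_r4 (P₀ i) (Finset.mem_filter.mp hi).2
  have L5 : ∀ i ∈ s5, (P₀ i).lt c d ∧ (P₀ i).lt a c ∧ (P₀ i).lt b a ∧ (P₀ i).lt a d ∧
      (P₀ i).lt b c ∧ (P₀ i).lt b d :=
    fun i hi => hw_r4 (P₀ i) (Finset.mem_filter.mp hi).2
  have L6 : ∀ i ∈ s6, (P₀ i).lt c d ∧ (P₀ i).lt b c ∧ (P₀ i).lt a b ∧ (P₀ i).lt b d ∧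
      (P₀ i).lt a c ∧ (P₀ i).lt a d :=
    fun i hi => hw_r4 (P₀ i) (Finset.mem_filter.mp hi).2
  -- disjointness
  have disj : ∀ (s t : Finset (Fin 24)) (u v : A), (∀ i ∈ s, (P₀ i).lt u v) →
      (∀ i ∈ t, (P₀ i).lt v u) → Disjoint s t := by
    intro s t u v hs ht
    rw [Finset.disjoint_left]
    intro i his hit
    exact hw_asymm (P₀ i) (hs i his) (ht i hit)
  have d12 : Disjoint s1 s2 :=
    disj s1 s2 d c (fun i hi => (L1 i hi).2.2.1) (fun i hi => (L2 i hi).2.2.1)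
  have d13 : Disjoint s1 s3 :=
    disj s1 s3 b a (fun i hi => (L1 i hi).1) (fun i hi => (L3 i hi).2.2.2.2.2)
  have d14 : Disjoint s1 s4 :=
    disj s1 s4 c a (fun i hi => (L1 i hi).2.2.2.1) (fun i hi => (L4 i hi).1)
  have d15 : Disjoint s1 s5 :=
    disj s1 s5 d a (fun i hi => (L1 i hi).2.2.2.2.2) (fun i hi => (L5 i hi).2.2.2.1)
  have d16 : Disjoint s1 s6 :=
    disj s1 s6 b a (fun i hi => (L1 i hi).1) (fun i hi => (L6 i hi).2.2.1)
  have d23 : Disjoint s2 s3 :=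
    disj s2 s3 b a (fun i hi => (L2 i hi).1) (fun i hi => (L3 i hi).2.2.2.2.2)
  have d24 : Disjoint s2 s4 :=
    disj s2 s4 c a (fun i hi => (L2 i hi).2.2.2.2.2) (fun i hi => (L4 i hi).1)
  have d25 : Disjoint s2 s5 :=
    disj s2 s5 d a (fun i hi => (L2 i hi).2.2.2.1) (fun i hi => (L5 i hi).2.2.2.1)
  have d26 : Disjoint s2 s6 :=
    disj s2 s6 b a (fun i hi => (L2 i hi).1) (fun i hi => (L6 i hi).2.2.1)
  have d34 : Disjoint s3 s4 :=
    disj s3 s4 c b (fun i hi => (L3 i hi).2.2.2.1) (fun i hi => (L4 i hi).2.2.2.1)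
  have d35 : Disjoint s3 s5 :=
    disj s3 s5 d b (fun i hi => (L3 i hi).1) (fun i hi => (L5 i hi).2.2.2.2.2)
  have d36 : Disjoint s3 s6 :=
    disj s3 s6 d b (fun i hi => (L3 i hi).1) (fun i hi => (L6 i hi).2.2.2.1)
  have d46 : Disjoint s4 s6 :=
    disj s4 s6 b a (fun i hi => (L4 i hi).2.1) (fun i hi => (L6 i hi).2.2.1)
  have d56 : Disjoint s5 s6 :=
    disj s5 s6 b a (fun i hi => (L5 i hi).2.2.1) (fun i hi => (L6 i hi).2.2.1)
  -- pick 3 voters of type cabd and one of type bdca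
  obtain ⟨t4, ht4sub, ht4card⟩ := Finset.exists_subset_card_eq (show 3 ≤ s4.card by rw [c4]; norm_num)
  obtain ⟨l1, hl1⟩ : s3.Nonempty := by rw [← Finset.card_pos, c3]; norm_num
  -- the first reversal step: reverse both abcd voters
  set Q1 : Fin 24 → LinearOrder A := fun i => if i ∈ s1 then revOrder (P₀ i) else P₀ i with hQ1
  have hQ1val : ∀ i, i ∉ s1 → Q1 i = P₀ i := by intro i hi; simp [hQ1, hi]
  have hQ1rev : ∀ i ∈ s1, Q1 i = revOrder (P₀ i) := by intro i hi; simp [hQ1, hi]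
  have hfQ1 : f Q1 ∈ ({c, d} : Set A) := by
    rw [hQ1]
    apply hwm_downset f hhwm _ P₀ s1
    · intro i hi x hx y hle
      obtain ⟨p1, p2, p3, p4, p5, p6⟩ := L1 i hi
      rcases hall y with rfl | rfl | rfl | rfl
      · exfalso
        rcases hx with rfl | rfl
        · exact hw_le_lt _ hle p4
        · exact hw_le_lt _ hle p6
      · exfalso
        rcases hx with rfl | rfl
        · exact hw_le_lt _ hle p2
        · exact hw_le_lt _ hle p5
      · exact Or.inl rfl
      · exact Or.inr rfl
    · rcases hor with h | h
      · rw [h]; exact Or.inl rfl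
      · rw [h]; exact Or.inr rfl
  rcases hfQ1 with hfc | hfd
  · -- case f Q1 = c : reverse the four abdc voters, then one bdca voter
    set Q2 : Fin 24 → LinearOrder A := fun i => if i ∈ s2 then revOrder (Q1 i) else Q1 i with hQ2
    have hQ2val : ∀ i, i ∉ s1 → i ∉ s2 → Q2 i = P₀ i := by
      intro i hi1 hi2; simp [hQ2, hi2, hQ1val i hi1]
    have hQ2rev1 : ∀ i ∈ s1, Q2 i = revOrder (P₀ i) := by
      intro i hi
      have : i ∉ s2 := Finset.disjoint_right.mp d12.symm hi
      simp [hQ2, this, hQ1rev i hi]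
    have hQ2rev2 : ∀ i ∈ s2, Q2 i = revOrder (P₀ i) := by
      intro i hi
      have : i ∉ s1 := Finset.disjoint_right.mp d12 hi
      simp [hQ2, hi, hQ1val i this]
    have hfQ2 : f Q2 ∈ ({c} : Set A) := by
      rw [hQ2]
      apply hwm_downset f hhwm _ Q1 s2
      · intro i hi x hx y hle
        have hi1 : i ∉ s1 := Finset.disjoint_right.mp d12 hi
        rw [hQ1val i hi1] at hle
        obtain ⟨p1, p2, p3, p4, p5, p6⟩ := L2 i hi
        rcases hx with rfl
        rcases hall y with rfl | rfl | rfl | rfl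
        · exact absurd (hw_le_lt _ hle p6) not_false
        · exact absurd (hw_le_lt _ hle p5) not_false
        · rfl
        · exact absurd (hw_le_lt _ hle p3) not_false
      · rw [hfc]; rfl
    have hfQ2c : f Q2 = c := hfQ2
    -- reverse one bdca voter
    have hl1ns1 : l1 ∉ s1 := Finset.disjoint_right.mp d13 hl1
    have hl1ns2 : l1 ∉ s2 := Finset.disjoint_right.mp d23 hl1
    have hQ2l1 : Q2 l1 = P₀ l1 := hQ2val l1 hl1ns1 hl1ns2
    have hmon := hhwm Q2 l1
    set Q3 := Function.update Q2 l1 (revOrder (Q2 l1)) with hQ3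
    have hQ3val : ∀ i, i ∉ s1 → i ∉ s2 → i ≠ l1 → Q3 i = P₀ i := by
      intro i hi1 hi2 hil
      rw [hQ3, Function.update_of_ne hil, hQ2val i hi1 hi2]
    have hQ3rev1 : ∀ i ∈ s1, Q3 i = revOrder (P₀ i) := by
      intro i hi
      have hil : i ≠ l1 := by rintro rfl; exact hl1ns1 hi
      rw [hQ3, Function.update_of_ne hil, hQ2rev1 i hi]
    have hQ3rev2 : ∀ i ∈ s2, Q3 i = revOrder (P₀ i) := by
      intro i hi
      have hil : i ≠ l1 := by rintro rfl; exact hl1ns2 hi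
      rw [hQ3, Function.update_of_ne hil, hQ2rev2 i hi]
    have hQ3l1 : Q3 l1 = revOrder (P₀ l1) := by
      rw [hQ3, Function.update_self, hQ2l1]
    -- d is the Condorcet winner of Q3
    have hcw : IsCondorcetWinner Q3 d := by
      intro y hy
      obtain h | h | h | h := hall y <;> rw [h]
      · -- y = a : take W = s1 ∪ s2 ∪ (s3 \ {l1}) ∪ s6
        apply hw_pair Q3 a d (s1 ∪ s2 ∪ (s3 \ {l1}) ∪ s6)
        · intro i hi
          simp only [Finset.mem_union, Finset.mem_sdiff, Finset.mem_singleton] at hi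
          rcases hi with ((hi | hi) | ⟨hi, hil⟩) | hi
          · rw [hQ3rev1 i hi]; exact (L1 i hi).2.2.2.2.2
          · rw [hQ3rev2 i hi]; exact (L2 i hi).2.2.2.1
          · rw [hQ3val i (Finset.disjoint_right.mp d13 hi) (Finset.disjoint_right.mp d23 hi) hil]
            exact (L3 i hi).2.2.2.2.1
          · rw [hQ3val i (Finset.disjoint_right.mp d16 hi) (Finset.disjoint_right.mp d26 hi)
              (by rintro rfl; exact Finset.disjoint_right.mp d36 hi hl1)]
            exact (L6 i hi).2.2.2.2.2
        · have e3 : Disjoint (s3 \ {l1}) s6 := Finset.disjoint_of_subset_left (Finset.sdiff_subset) d36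
          have e2 : Disjoint s2 (s3 \ {l1}) := Finset.disjoint_of_subset_right (Finset.sdiff_subset) d23
          have e1 : Disjoint s1 s2 := d12
          rw [Finset.card_union_of_disjoint (by
              rw [Finset.disjoint_union_left, Finset.disjoint_union_left]
              exact ⟨⟨d16, d26⟩, e3⟩),
            Finset.card_union_of_disjoint (by
              rw [Finset.disjoint_union_left]
              exact ⟨Finset.disjoint_of_subset_right (Finset.sdiff_subset) d13, e2⟩),
            Finset.card_union_of_disjoint e1,
            Finset.card_sdiff_of_subset (Finset.singleton_subset_iff.mpr hl1),
            c1, c2, c3, c6, Finset.card_singleton]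
      · -- y = b : take W = s1 ∪ s2 ∪ {l1} ∪ s5 ∪ s6
        apply hw_pair Q3 b d (s1 ∪ s2 ∪ {l1} ∪ s5 ∪ s6)
        · intro i hi
          simp only [Finset.mem_union, Finset.mem_singleton] at hi
          rcases hi with (((hi | hi) | hi) | hi) | hi
          · rw [hQ3rev1 i hi]; exact (L1 i hi).2.2.2.2.1
          · rw [hQ3rev2 i hi]; exact (L2 i hi).2.1
          · subst hi; rw [hQ3l1]; exact (L3 i hl1).1
          · rw [hQ3val i (Finset.disjoint_right.mp d15 hi) (Finset.disjoint_right.mp d25 hi)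
              (by rintro rfl; exact Finset.disjoint_right.mp d35 hi hl1)]
            exact (L5 i hi).2.2.2.2.2
          · rw [hQ3val i (Finset.disjoint_right.mp d16 hi) (Finset.disjoint_right.mp d26 hi)
              (by rintro rfl; exact Finset.disjoint_right.mp d36 hi hl1)]
            exact (L6 i hi).2.2.2.1
        · have el1 : l1 ∉ s1 ∪ s2 := by
            simp only [Finset.mem_union]
            rintro (h | h)
            exacts [hl1ns1 h, hl1ns2 h]
          rw [Finset.card_union_of_disjoint (by
              rw [Finset.disjoint_union_left, Finset.disjoint_union_left, Finset.disjoint_union_left]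
              refine ⟨⟨⟨d16, d26⟩, ?_⟩, d56⟩
              simp only [Finset.disjoint_singleton_left]
              exact Finset.disjoint_left.mp d36 hl1),
            Finset.card_union_of_disjoint (by
              rw [Finset.disjoint_union_left, Finset.disjoint_union_left]
              refine ⟨⟨d15, d25⟩, ?_⟩
              simp only [Finset.disjoint_singleton_left]
              exact Finset.disjoint_left.mp d35 hl1),
            Finset.card_union_of_disjoint (by
              simp only [Finset.disjoint_singleton_right]
              exact el1),
            Finset.card_union_of_disjoint d12,
            c1, c2, c5, c6, Finset.card_singleton]
      · -- y = c : take W = s1 ∪ (s3 \ {l1}) ∪ s5 ∪ s6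
        apply hw_pair Q3 c d (s1 ∪ (s3 \ {l1}) ∪ s5 ∪ s6)
        · intro i hi
          simp only [Finset.mem_union, Finset.mem_sdiff, Finset.mem_singleton] at hi
          rcases hi with ((hi | ⟨hi, hil⟩) | hi) | hi
          · rw [hQ3rev1 i hi]; exact (L1 i hi).2.2.1
          · rw [hQ3val i (Finset.disjoint_right.mp d13 hi) (Finset.disjoint_right.mp d23 hi) hil]
            exact (L3 i hi).2.1
          · rw [hQ3val i (Finset.disjoint_right.mp d15 hi) (Finset.disjoint_right.mp d25 hi)
              (by rintro rfl; exact Finset.disjoint_right.mp d35 hi hl1)]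
            exact (L5 i hi).1
          · rw [hQ3val i (Finset.disjoint_right.mp d16 hi) (Finset.disjoint_right.mp d26 hi)
              (by rintro rfl; exact Finset.disjoint_right.mp d36 hi hl1)]
            exact (L6 i hi).1
        · rw [Finset.card_union_of_disjoint (by
              rw [Finset.disjoint_union_left, Finset.disjoint_union_left]
              exact ⟨⟨d16, Finset.disjoint_of_subset_left (Finset.sdiff_subset) d36⟩, d56⟩),
            Finset.card_union_of_disjoint (by
              rw [Finset.disjoint_union_left]
              exact ⟨d15, Finset.disjoint_of_subset_left (Finset.sdiff_subset) d35⟩),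
            Finset.card_union_of_disjoint
              (Finset.disjoint_of_subset_right (Finset.sdiff_subset) d13),
            Finset.card_sdiff_of_subset (Finset.singleton_subset_iff.mpr hl1),
            c1, c3, c5, c6, Finset.card_singleton]
      · exact absurd h hy
    have hfQ3 : f Q3 = d := hf Q3 d hcw
    rw [hfQ3, hfQ2c, hQ2l1] at hmon
    exact hw_le_lt (P₀ l1) hmon (L3 l1 hl1).2.1
  · -- case f Q1 = d : reverse three cabd voters
    set Q2 : Fin 24 → LinearOrder A := fun i => if i ∈ t4 then revOrder (Q1 i) else Q1 i with hQ2
    have hQ2val : ∀ i, i ∉ s1 → i ∉ t4 → Q2 i = P₀ i := by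
      intro i hi1 hi2; simp [hQ2, hi2, hQ1val i hi1]
    have hQ2rev1 : ∀ i ∈ s1, Q2 i = revOrder (P₀ i) := by
      intro i hi
      have : i ∉ t4 := fun h => Finset.disjoint_right.mp d14 (ht4sub h) hi
      simp [hQ2, this, hQ1rev i hi]
    have hQ2rev4 : ∀ i ∈ t4, Q2 i = revOrder (P₀ i) := by
      intro i hi
      have : i ∉ s1 := Finset.disjoint_right.mp d14 (ht4sub hi)
      simp [hQ2, hi, hQ1val i this]
    have hfQ2 : f Q2 ∈ ({d} : Set A) := by
      rw [hQ2]
      apply hwm_downset f hhwm _ Q1 t4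
      · intro i hi x hx y hle
        have hi4 : i ∈ s4 := ht4sub hi
        have hi1 : i ∉ s1 := Finset.disjoint_right.mp d14 hi4
        rw [hQ1val i hi1] at hle
        obtain ⟨p1, p2, p3, p4, p5, p6⟩ := L4 i hi4
        rcases hx with rfl
        rcases hall y with rfl | rfl | rfl | rfl
        · exact absurd (hw_le_lt _ hle p5) not_false
        · exact absurd (hw_le_lt _ hle p3) not_false
        · exact absurd (hw_le_lt _ hle p6) not_false
        · rfl
      · rw [hfd]; rfl
    have hfQ2d : f Q2 = d := hfQ2
    -- b is the Condorcet winner of Q2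
    have hcw : IsCondorcetWinner Q2 b := by
      intro y hy
      obtain h | h | h | h := hall y <;> rw [h]
      · -- y = a : take W = s3 ∪ s6 ∪ s1 ∪ t4
        apply hw_pair Q2 a b (s3 ∪ s6 ∪ s1 ∪ t4)
        · intro i hi
          simp only [Finset.mem_union] at hi
          rcases hi with ((hi | hi) | hi) | hi
          · rw [hQ2val i (Finset.disjoint_right.mp d13 hi)
              (fun h => Finset.disjoint_left.mp d34 hi (ht4sub h))]
            exact (L3 i hi).2.2.2.2.2
          · rw [hQ2val i (Finset.disjoint_right.mp d16 hi)
              (fun h => Finset.disjoint_left.mp d46 (ht4sub h) hi)]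
            exact (L6 i hi).2.2.1
          · rw [hQ2rev1 i hi]; exact (L1 i hi).1
          · rw [hQ2rev4 i hi]; exact (L4 i (ht4sub hi)).2.1
        · rw [Finset.card_union_of_disjoint (by
              rw [Finset.disjoint_union_left, Finset.disjoint_union_left]
              exact ⟨⟨Finset.disjoint_of_subset_right ht4sub d34,
                Finset.disjoint_of_subset_right ht4sub d46.symm⟩,
                Finset.disjoint_of_subset_right ht4sub d14⟩),
            Finset.card_union_of_disjoint (by
              rw [Finset.disjoint_union_left]
              exact ⟨d13.symm, d16.symm⟩),
            Finset.card_union_of_disjoint d36,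
            c1, c3, c6, ht4card]
      · exact absurd h hy
      · -- y = c : take W = s2 ∪ s3 ∪ t4
        apply hw_pair Q2 c b (s2 ∪ s3 ∪ t4)
        · intro i hi
          simp only [Finset.mem_union] at hi
          rcases hi with (hi | hi) | hi
          · rw [hQ2val i (Finset.disjoint_right.mp d12 hi)
              (fun h => Finset.disjoint_left.mp d24 hi (ht4sub h))]
            exact (L2 i hi).2.2.2.2.1
          · rw [hQ2val i (Finset.disjoint_right.mp d13 hi)
              (fun h => Finset.disjoint_left.mp d34 hi (ht4sub h))]
            exact (L3 i hi).2.2.2.1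
          · rw [hQ2rev4 i hi]; exact (L4 i (ht4sub hi)).2.2.2.1
        · rw [Finset.card_union_of_disjoint (by
              rw [Finset.disjoint_union_left]
              exact ⟨Finset.disjoint_of_subset_right ht4sub d24,
                Finset.disjoint_of_subset_right ht4sub d34⟩),
            Finset.card_union_of_disjoint d23,
            c2, c3, ht4card]
      · -- y = d : take W = s2 ∪ s3 ∪ (s4 \ t4)
        apply hw_pair Q2 d b (s2 ∪ s3 ∪ (s4 \ t4))
        · intro i hi
          simp only [Finset.mem_union, Finset.mem_sdiff] at hi
          rcases hi with (hi | hi) | ⟨hi, hit⟩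
          · rw [hQ2val i (Finset.disjoint_right.mp d12 hi)
              (fun h => Finset.disjoint_left.mp d24 hi (ht4sub h))]
            exact (L2 i hi).2.1
          · rw [hQ2val i (Finset.disjoint_right.mp d13 hi)
              (fun h => Finset.disjoint_left.mp d34 hi (ht4sub h))]
            exact (L3 i hi).1
          · rw [hQ2val i (Finset.disjoint_right.mp d14 hi) hit]
            exact (L4 i hi).2.2.1
        · rw [Finset.card_union_of_disjoint (by
              rw [Finset.disjoint_union_left]
              exact ⟨Finset.disjoint_of_subset_right (Finset.sdiff_subset) d24,
                Finset.disjoint_of_subset_right (Finset.sdiff_subset) d34⟩),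
            Finset.card_union_of_disjoint d23,
            Finset.card_sdiff_of_subset ht4sub,
            c2, c3, c4, ht4card]
    have : f Q2 = b := hf Q2 b hcw
    exact hbd (this ▸ hfQ2d)
end
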